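/- arXiv:2109.02603 — 10 statements merged into one kernel-verified Lean document; each statement's English description precedes it below -/
import Mathlib

section
/- If F is a twice differentiable CDF with density f = F' such that f'(x) ≥ 0 for all x < F⁻¹(ε) and F(x)(1-F(x))·|f'(x)|/f(x)² ≤ C₀ whenever F(x) ∈ (0, ε), then there exists a constant K₀ > 0 (depending only on C₀, ε, and f(F⁻¹(ε))) such that for all t ∈ (0, ε): 1/f(F⁻¹(t)) ≤ K₀ · t^(−C₀). -/
open MeasureTheory Real Set

/-- C-R condition first bound: `1 / f (F⁻¹ t) ≤ K₀ * t ^ (-C₀)` for `t ∈ (0, ε)`. -/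
theorem stmt_0
    (F f Finv : ℝ → ℝ) (ε C₀ : ℝ)
    (hε : ε ∈ Set.Ioo (0 : ℝ) (1/2)) (hC₀ : 0 < C₀)
    (hF : ∀ x, HasDerivAt F (f x) x)
    (hf2 : ∀ x, DifferentiableAt ℝ f x)
    (hfpos : ∀ x, 0 < f x)
    (hFmono : StrictMono F)
    (hFinv : ∀ t ∈ Set.Ioo (0 : ℝ) 1, F (Finv t) = t)
    (hCR : ∀ x, F x ∈ Set.Ioo 0 ε → F x * (1 - F x) * |deriv f x| / (f x) ^ 2 ≤ C₀)
    (hmon : ∀ x, x < Finv ε → 0 ≤ deriv f x) :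
    ∃ K₀ > 0, ∀ t ∈ Set.Ioo 0 ε, 1 / f (Finv t) ≤ K₀ * t ^ (-C₀) := by
  obtain ⟨hε0, hεh⟩ := hε
  have hε1 : ε < 1 := by linarith
  set a := Finv ε with ha
  have hFa : F a = ε := hFinv ε ⟨hε0, hε1⟩
  set K₀ := (ε / (1 - ε)) ^ C₀ / f a with hK
  have hEpos : 0 < (ε / (1 - ε)) ^ C₀ := Real.rpow_pos_of_pos (div_pos hε0 (by linarith)) _
  have hK0 : 0 < K₀ := div_pos hEpos (hfpos a)
  refine ⟨K₀, hK0, ?_⟩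
  intro t ht
  obtain ⟨ht0, htε⟩ := ht
  have ht1 : t < 1 := by linarith
  set b := Finv t with hb
  have hFb : F b = t := hFinv t ⟨ht0, ht1⟩
  have hba : b < a := by
    have : F b < F a := by rw [hFa, hFb]; exact htε
    exact hFmono.lt_iff_lt.mp this
  set φ : ℝ → ℝ := fun x => Real.log (f x) - C₀ * (Real.log (F x) - Real.log (1 - F x))
    with hφdef
  have hderiv : ∀ x, F x ∈ Set.Ioo (0:ℝ) 1 → HasDerivAt φ
      (deriv f x / f x - C₀ * (f x / F x - (0 - f x) / (1 - F x))) x := by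
    intro x hx
    have h1 : HasDerivAt (fun x => Real.log (f x)) (deriv f x / f x) x :=
      (hf2 x).hasDerivAt.log (hfpos x).ne'
    have h2 : HasDerivAt (fun x => Real.log (F x)) (f x / F x) x := (hF x).log hx.1.ne'
    have h3 : HasDerivAt (fun x => Real.log (1 - F x)) ((0 - f x) / (1 - F x)) x :=
      ((hasDerivAt_const x (1:ℝ)).sub (hF x)).log
        (by have := hx.2; intro h; nlinarith [sub_eq_zero.mp h])
    exact h1.sub ((h2.sub h3).const_mul C₀)
  -- membership facts
  have hmem01 : ∀ x ∈ Set.Icc b a, F x ∈ Set.Ioo (0:ℝ) 1 := by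
    intro x hx
    constructor
    · have : F b ≤ F x := hFmono.monotone hx.1
      rw [hFb] at this; linarith
    · have : F x ≤ F a := hFmono.monotone hx.2
      rw [hFa] at this; linarith
  have hmemε : ∀ x ∈ Set.Ioo b a, F x ∈ Set.Ioo (0:ℝ) ε := by
    intro x hx
    constructor
    · have : F b < F x := hFmono hx.1
      rw [hFb] at this; linarith
    · have : F x < F a := hFmono hx.2
      rw [hFa] at this; linarith
  have hanti : AntitoneOn φ (Set.Icc b a) := by
    apply antitoneOn_of_deriv_nonpos (convex_Icc b a)
    · intro x hx
      exact ((hderiv x (hmem01 x hx)).differentiableAt).continuousAt.continuousWithinAt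
    · intro x hx
      rw [interior_Icc] at hx
      exact ((hderiv x (hmem01 x (Set.Ioo_subset_Icc_self hx))).differentiableAt).differentiableWithinAt
    · intro x hx
      rw [interior_Icc] at hx
      have hFx : F x ∈ Set.Ioo (0:ℝ) ε := hmemε x hx
      rw [(hderiv x ⟨hFx.1, lt_trans hFx.2 hε1⟩).deriv]
      have hA0 : 0 < F x := hFx.1
      have hA1 : 0 < 1 - F x := by have := hFx.2; linarith
      have hc : 0 < f x := hfpos x
      have key : deriv f x * (F x * (1 - F x)) ≤ C₀ * (f x) ^ 2 := by
        have h := hCR x hFx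
        rw [div_le_iff₀ (by positivity)] at h
        nlinarith [le_abs_self (deriv f x), mul_pos hA0 hA1]
      have e : f x / F x - (0 - f x) / (1 - F x) = f x / (F x * (1 - F x)) := by
        field_simp; ring
      rw [e, sub_nonpos, mul_div_assoc']
      rw [div_le_div_iff₀ hc (by positivity)]
      nlinarith [key]
  have hφab : φ a ≤ φ b :=
    hanti (Set.left_mem_Icc.mpr hba.le) (Set.right_mem_Icc.mpr hba.le) hba.le
  simp only [hφdef, hFa, hFb] at hφab
  -- exponentiate
  have h1t : 0 < 1 - t := by linarith
  have h1ε : 0 < 1 - ε := by linarith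
  have hlog : Real.log (f a * ((t / (1 - t)) ^ C₀ * ((1 - ε) / ε) ^ C₀)) ≤ Real.log (f b) := by
    rw [Real.log_mul (hfpos a).ne' (by positivity), Real.log_mul (by positivity) (by positivity),
      Real.log_rpow (by positivity), Real.log_rpow (by positivity),
      Real.log_div ht0.ne' h1t.ne', Real.log_div h1ε.ne' hε0.ne']
    nlinarith [hφab]
  have hexp : f a * ((t / (1 - t)) ^ C₀ * ((1 - ε) / ε) ^ C₀) ≤ f b :=
    (Real.log_le_log_iff (mul_pos (hfpos a) (mul_pos
      (Real.rpow_pos_of_pos (div_pos ht0 h1t) _)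
      (Real.rpow_pos_of_pos (div_pos h1ε hε0) _))) (hfpos b)).mp hlog
  have hrw : ((1 - ε) / ε) ^ C₀ = ((ε / (1 - ε)) ^ C₀)⁻¹ := by
    rw [← Real.inv_rpow (le_of_lt (div_pos hε0 h1ε)), inv_div]
  have h1 : t ^ C₀ ≤ (t / (1 - t)) ^ C₀ := by
    apply Real.rpow_le_rpow ht0.le _ hC₀.le
    rw [le_div_iff₀ h1t]; nlinarith
  have hmain : f a * t ^ C₀ ≤ (ε / (1 - ε)) ^ C₀ * f b := by
    rw [hrw] at hexp
    have h2 : f a * (t ^ C₀ * ((ε / (1 - ε)) ^ C₀)⁻¹) ≤ f b := by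
      refine le_trans ?_ hexp
      have := mul_le_mul_of_nonneg_right h1 (le_of_lt (inv_pos.mpr hEpos))
      nlinarith [hfpos a]
    have := mul_le_mul_of_nonneg_right h2 hEpos.le
    calc f a * t ^ C₀ = f a * (t ^ C₀ * ((ε / (1 - ε)) ^ C₀)⁻¹) * ((ε / (1 - ε)) ^ C₀) := by
          field_simp
      _ ≤ f b * ((ε / (1 - ε)) ^ C₀) := this
      _ = (ε / (1 - ε)) ^ C₀ * f b := by ring
  have hT : 0 < t ^ C₀ := Real.rpow_pos_of_pos ht0 _
  rw [Real.rpow_neg ht0.le, hK, ← div_eq_mul_inv, div_div,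
    div_le_div_iff₀ (hfpos b) (mul_pos (hfpos a) hT)]
  nlinarith [hmain]
end

section
/- Under the same C-R condition (f'(x) ≥ 0 for x < F⁻¹(ε) and F(x)(1-F(x))·|f'(x)|/f(x)² ≤ C₀ for F(x) ∈ (0,ε)) with C₀ ≠ 1, there exist constants K₁, K₂ > 0 such that for all t ∈ (0, ε): |F⁻¹(t)| ≤ K₁ · t^(1−C₀) + K₂. -/
open MeasureTheory Real Set

/-- C-R condition second bound: `|F⁻¹ t| ≤ K₁ * t ^ (1 - C₀) + K₂` for `t ∈ (0, ε)`. -/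
theorem stmt_1
    (F f Finv : ℝ → ℝ) (ε C₀ : ℝ)
    (hε : ε ∈ Set.Ioo (0 : ℝ) (1/2)) (hC₀ : 0 < C₀) (hC₀1 : C₀ ≠ 1)
    (hF : ∀ x, HasDerivAt F (f x) x)
    (hf2 : ∀ x, DifferentiableAt ℝ f x)
    (hfpos : ∀ x, 0 < f x)
    (hFmono : StrictMono F)
    (hFinv : ∀ t ∈ Set.Ioo (0 : ℝ) 1, F (Finv t) = t)
    (hCR : ∀ x, F x ∈ Set.Ioo 0 ε → F x * (1 - F x) * |deriv f x| / (f x) ^ 2 ≤ C₀)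
    (hmon : ∀ x, x < Finv ε → 0 ≤ deriv f x) :
    ∃ K₁ > 0, ∃ K₂ > 0, ∀ t ∈ Set.Ioo 0 ε, |Finv t| ≤ K₁ * t ^ (1 - C₀) + K₂ := by
  obtain ⟨hε0, hε12⟩ := hε
  have hε1 : ε < 1 := by linarith
  set b := Finv ε with hb
  have hFb : F b = ε := hFinv ε ⟨hε0, hε1⟩
  set Lb : ℝ := C₀ * log ε - C₀ * log (1 - ε) - log (f b) with hLbdef
  set c : ℝ := exp (-Lb) with hcdef
  have hc : 0 < c := exp_pos _
  have habsC : 0 < |1 - C₀| := abs_pos.mpr (sub_ne_zero.mpr (Ne.symm hC₀1))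
  have hD : 0 < |1 - C₀| * c := mul_pos habsC hc
  refine ⟨1 / (|1 - C₀| * c), by positivity,
    |b| + exp ((1 - C₀) * log ε) / (|1 - C₀| * c) + 1, ?_, ?_⟩
  · have h1 : 0 ≤ |b| := abs_nonneg _
    have h2 : 0 < exp ((1 - C₀) * log ε) / (|1 - C₀| * c) := div_pos (exp_pos _) hD
    linarith
  rintro t ⟨ht0, htε⟩
  set a := Finv t with ha
  have hFa : F a = t := hFinv t ⟨ht0, by linarith⟩
  have hab : a < b := hFmono.lt_iff_lt.mp (by rw [hFa, hFb]; exact htε)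
  have hmem : ∀ x ∈ Icc a b, 0 < F x ∧ F x < 1 := by
    intro x hx
    have h1 : t ≤ F x := hFa ▸ hFmono.monotone hx.1
    have h2 : F x ≤ ε := hFb ▸ hFmono.monotone hx.2
    exact ⟨lt_of_lt_of_le ht0 h1, by linarith⟩
  -- Step 1: the function L is monotone on [a, b]
  set L : ℝ → ℝ := fun x => C₀ * log (F x) - C₀ * log (1 - F x) - log (f x) with hLdef
  have hLx : ∀ x ∈ Icc a b, HasDerivAt L
      (C₀ * (f x / F x) - C₀ * ((0 - f x) / (1 - F x)) - deriv f x / f x) x := by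
    intro x hx
    obtain ⟨hp, hq⟩ := hmem x hx
    have h1 : HasDerivAt (fun y => log (F y)) (f x / F x) x := (hF x).log hp.ne'
    have h2 : HasDerivAt (fun y => log (1 - F y)) ((0 - f x) / (1 - F x)) x :=
      (((hasDerivAt_const x (1 : ℝ)).sub (hF x)).log (show (1:ℝ) - F x ≠ 0 by linarith))
    have h3 : HasDerivAt (fun y => log (f y)) (deriv f x / f x) x :=
      ((hf2 x).hasDerivAt).log (hfpos x).ne'
    exact ((h1.const_mul C₀).sub (h2.const_mul C₀)).sub h3
  have hLmono : MonotoneOn L (Icc a b) := by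
    apply monotoneOn_of_deriv_nonneg (convex_Icc a b)
    · exact fun x hx => ((hLx x hx).continuousAt).continuousWithinAt
    · intro x hx
      rw [interior_Icc] at hx
      exact ((hLx x (Ioo_subset_Icc_self hx)).differentiableAt).differentiableWithinAt
    · intro x hx
      rw [interior_Icc] at hx
      have hxI : x ∈ Icc a b := Ioo_subset_Icc_self hx
      obtain ⟨hp, hq⟩ := hmem x hxI
      have hq' : 0 < 1 - F x := by linarith
      have hFxε : F x < ε := by rw [← hFb]; exact hFmono hx.2
      have hd0 : 0 ≤ deriv f x := hmon x hx.2
      have hcr := hCR x ⟨hp, hFxε⟩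
      rw [abs_of_nonneg hd0] at hcr
      have hcr' : F x * (1 - F x) * deriv f x ≤ C₀ * f x ^ 2 := by
        rw [div_le_iff₀ (pow_pos (hfpos x) 2)] at hcr; linarith
      rw [(hLx x hxI).deriv]
      have heq : C₀ * (f x / F x) - C₀ * ((0 - f x) / (1 - F x)) - deriv f x / f x
          = (C₀ * f x ^ 2 - F x * (1 - F x) * deriv f x) / (F x * (1 - F x) * f x) := by
        field_simp [hp.ne', hq'.ne', (hfpos x).ne']
        ring
      rw [heq]
      exact div_nonneg (by linarith)
        (mul_nonneg (mul_nonneg hp.le hq'.le) (hfpos x).le)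
  -- Step 2: lower bound on f on [a, b]
  have hflow : ∀ x ∈ Icc a b, c * exp (C₀ * log (F x)) ≤ f x := by
    intro x hx
    obtain ⟨hp, hq⟩ := hmem x hx
    have hLle : L x ≤ L b := hLmono hx (right_mem_Icc.mpr hab.le) hx.2
    have hLbval : L b = Lb := by simp only [hLdef]; rw [hFb]
    have hlog1 : log (1 - F x) ≤ 0 := Real.log_nonpos (by linarith) (by linarith)
    have h6 : C₀ * log (1 - F x) ≤ 0 := by nlinarith
    have h5 : C₀ * log (F x) - Lb ≤ log (f x) := by
      rw [hLbval] at hLle; simp only [hLdef] at hLle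
      linarith
    calc c * exp (C₀ * log (F x)) = exp (C₀ * log (F x) - Lb) := by
          rw [hcdef, ← Real.exp_add]
          rw [show -Lb + C₀ * log (F x) = C₀ * log (F x) - Lb by ring]
      _ ≤ exp (log (f x)) := Real.exp_le_exp.mpr h5
      _ = f x := Real.exp_log (hfpos x)
  have hfexp : ∀ x ∈ Icc a b, c ≤ f x * exp (-(C₀ * log (F x))) := by
    intro x hx
    have h7 := mul_le_mul_of_nonneg_right (hflow x hx) (Real.exp_pos (-(C₀ * log (F x)))).le
    rw [mul_assoc, ← Real.exp_add] at h7
    simpa using h7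
  -- Step 3: derivative of G
  have hGx : ∀ x ∈ Icc a b, HasDerivAt (fun y => exp ((1 - C₀) * log (F y)))
      ((1 - C₀) * (f x * exp (-(C₀ * log (F x))))) x := by
    intro x hx
    obtain ⟨hp, hq⟩ := hmem x hx
    have h1 : HasDerivAt (fun y => (1 - C₀) * log (F y)) ((1 - C₀) * (f x / F x)) x :=
      ((hF x).log hp.ne').const_mul (1 - C₀)
    have h2 := h1.exp
    convert h2 using 1
    rw [show (1 - C₀) * log (F x) = log (F x) + -(C₀ * log (F x)) by ring,
      Real.exp_add, Real.exp_log hp]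
    field_simp
  -- Step 4: the key bound
  have bound : b - a ≤ (exp ((1 - C₀) * log t) + exp ((1 - C₀) * log ε)) / (|1 - C₀| * c) := by
    rcases hC₀1.lt_or_gt with hlt | hgt
    · -- C₀ < 1
      have hφx : ∀ x ∈ Icc a b, HasDerivAt
          (fun y => exp ((1 - C₀) * log (F y)) - (1 - C₀) * c * y)
          ((1 - C₀) * (f x * exp (-(C₀ * log (F x)))) - (1 - C₀) * c) x := by
        intro x hx
        have h2 : HasDerivAt (fun y : ℝ => (1 - C₀) * c * y) ((1 - C₀) * c) x := by
          simpa using (hasDerivAt_id x).const_mul ((1 - C₀) * c)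
        exact (hGx x hx).sub h2
      have hφmono : MonotoneOn
          (fun y => exp ((1 - C₀) * log (F y)) - (1 - C₀) * c * y) (Icc a b) := by
        apply monotoneOn_of_deriv_nonneg (convex_Icc a b)
        · exact fun x hx => ((hφx x hx).continuousAt).continuousWithinAt
        · intro x hx
          rw [interior_Icc] at hx
          exact ((hφx x (Ioo_subset_Icc_self hx)).differentiableAt).differentiableWithinAt
        · intro x hx
          rw [interior_Icc] at hx
          have hxI : x ∈ Icc a b := Ioo_subset_Icc_self hx
          rw [(hφx x hxI).deriv]
          have h8 := hfexp x hxI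
          nlinarith [mul_nonneg (by linarith : (0:ℝ) ≤ 1 - C₀)
            (by linarith : (0:ℝ) ≤ f x * exp (-(C₀ * log (F x))) - c)]
      have hm := hφmono (left_mem_Icc.mpr hab.le) (right_mem_Icc.mpr hab.le) hab.le
      simp only at hm
      rw [hFa, hFb] at hm
      rw [le_div_iff₀ hD, abs_of_pos (by linarith : (0:ℝ) < 1 - C₀)]
      have hid : (b - a) * ((1 - C₀) * c) = (1 - C₀) * c * b - (1 - C₀) * c * a := by ring
      have hEt : 0 < exp ((1 - C₀) * log t) := exp_pos _
      linarith
    · -- C₀ > 1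
      have hφx : ∀ x ∈ Icc a b, HasDerivAt
          (fun y => exp ((1 - C₀) * log (F y)) + (C₀ - 1) * c * y)
          ((1 - C₀) * (f x * exp (-(C₀ * log (F x)))) + (C₀ - 1) * c) x := by
        intro x hx
        have h2 : HasDerivAt (fun y : ℝ => (C₀ - 1) * c * y) ((C₀ - 1) * c) x := by
          simpa using (hasDerivAt_id x).const_mul ((C₀ - 1) * c)
        exact (hGx x hx).add h2
      have hφanti : AntitoneOn
          (fun y => exp ((1 - C₀) * log (F y)) + (C₀ - 1) * c * y) (Icc a b) := by
        apply antitoneOn_of_deriv_nonpos (convex_Icc a b)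
        · exact fun x hx => ((hφx x hx).continuousAt).continuousWithinAt
        · intro x hx
          rw [interior_Icc] at hx
          exact ((hφx x (Ioo_subset_Icc_self hx)).differentiableAt).differentiableWithinAt
        · intro x hx
          rw [interior_Icc] at hx
          have hxI : x ∈ Icc a b := Ioo_subset_Icc_self hx
          rw [(hφx x hxI).deriv]
          have h8 := hfexp x hxI
          nlinarith [mul_nonneg (by linarith : (0:ℝ) ≤ C₀ - 1)
            (by linarith : (0:ℝ) ≤ f x * exp (-(C₀ * log (F x))) - c)]
      have hm := hφanti (left_mem_Icc.mpr hab.le) (right_mem_Icc.mpr hab.le) hab.le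
      simp only at hm
      rw [hFa, hFb] at hm
      rw [le_div_iff₀ hD, abs_of_neg (by linarith : 1 - C₀ < 0)]
      have hid : (b - a) * (-(1 - C₀) * c) = (C₀ - 1) * c * b - (C₀ - 1) * c * a := by ring
      have hEε : 0 < exp ((1 - C₀) * log ε) := exp_pos _
      linarith
  -- Step 5: conclude
  have hrpow : t ^ (1 - C₀) = exp ((1 - C₀) * log t) := by
    rw [Real.rpow_def_of_pos ht0, mul_comm]
  have htri : |a| ≤ |b| + (b - a) := by
    have h := abs_sub_abs_le_abs_sub a b
    rw [abs_sub_comm, abs_of_nonneg (by linarith : (0:ℝ) ≤ b - a)] at h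
    linarith
  rw [hrpow]
  have hsplit : (exp ((1 - C₀) * log t) + exp ((1 - C₀) * log ε)) / (|1 - C₀| * c)
      = exp ((1 - C₀) * log t) / (|1 - C₀| * c) + exp ((1 - C₀) * log ε) / (|1 - C₀| * c) :=
    add_div _ _ _
  have hone : 1 / (|1 - C₀| * c) * exp ((1 - C₀) * log t)
      = exp ((1 - C₀) * log t) / (|1 - C₀| * c) := by ring
  linarith
end

section
/- For the standard Cauchy density f(x) = 1/(π(1+x²)), the C-R condition holds with ε = 1/2 and C₀ = 2; that is, F(x)(1−F(x))·|f'(x)|/f(x)² ≤ 2 for all x, and f'(x) ≥ 0 for x < 0, f'(x) ≤ 0 for x > 0. -/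
open MeasureTheory Real Set

lemma arctan_le_self' {x : ℝ} (hx : 0 ≤ x) : Real.arctan x ≤ x := by
  have h1 : 0 ≤ Real.arctan x := by
    rw [← Real.arctan_zero]
    exact Real.arctan_strictMono.monotone hx
  have h2 := Real.le_tan h1 (Real.arctan_lt_pi_div_two x)
  rwa [Real.tan_arctan] at h2

lemma cauchy_deriv (f : ℝ → ℝ) (hf : ∀ x, f x = 1 / (π * (1 + x ^ 2))) (x : ℝ) :
    deriv f x = -(2 * x) / (π * (1 + x ^ 2) ^ 2) := by
  have hx : (0:ℝ) < 1 + x ^ 2 := by positivity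
  have hπ : (0:ℝ) < π := Real.pi_pos
  have hd : HasDerivAt (fun y : ℝ => 1 / (π * (1 + y ^ 2)))
      (-(2 * x) / (π * (1 + x ^ 2) ^ 2)) x := by
    have hg : HasDerivAt (fun y : ℝ => π * (1 + y ^ 2)) (π * (2 * x)) x := by
      have : HasDerivAt (fun y : ℝ => 1 + y ^ 2) (2 * x) x := by
        simpa using ((hasDerivAt_pow 2 x).const_add 1)
      simpa using this.const_mul π
    have hne : π * (1 + x ^ 2) ≠ 0 := by positivity
    have : HasDerivAt (fun y : ℝ => 1 / (π * (1 + y ^ 2))) _ x := (hasDerivAt_const x (1:ℝ)).div hg hne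
    convert this using 1
    field_simp
    ring
  have hfe : f = fun y : ℝ => 1 / (π * (1 + y ^ 2)) := funext hf
  rw [hfe]
  exact hd.deriv

/-- The standard Cauchy satisfies the C-R condition with ε = 1/2 and C₀ = 2. -/
theorem stmt_3
    (f F : ℝ → ℝ)
    (hf : ∀ x, f x = 1 / (π * (1 + x ^ 2)))
    (hF : ∀ x, F x = 1 / 2 + Real.arctan x / π) :
    (∀ x : ℝ, F x * (1 - F x) * |deriv f x| / (f x) ^ 2 ≤ 2) ∧
    (∀ x : ℝ, x < 0 → 0 ≤ deriv f x) ∧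
    (∀ x : ℝ, 0 < x → deriv f x ≤ 0) := by
  have hπ : (0:ℝ) < π := Real.pi_pos
  refine ⟨?_, ?_, ?_⟩
  · intro x
    have hx : (0:ℝ) < 1 + x ^ 2 := by positivity
    have hd := cauchy_deriv f hf x
    have ha1 : Real.arctan x < π / 2 := Real.arctan_lt_pi_div_two x
    have ha2 : -(π / 2) < Real.arctan x := Real.neg_pi_div_two_lt_arctan x
    -- rewrite the expression
    have hval : F x * (1 - F x) * |deriv f x| / (f x) ^ 2
        = (1 / 4 - (Real.arctan x / π) ^ 2) * (2 * π * |x|) := by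
      rw [hF, hf, hd]
      rw [abs_div, abs_neg, abs_mul, abs_of_nonneg (by norm_num : (0:ℝ) ≤ 2),
        abs_of_pos (by positivity : (0:ℝ) < π * (1 + x ^ 2) ^ 2)]
      field_simp
      ring
    rw [hval]
    -- key inequality: (1/4 - (arctan x/π)^2) * (π*|x|) ≤ 1
    have key : (1 / 4 - (Real.arctan x / π) ^ 2) * (π * |x|) ≤ 1 := by
      rcases lt_trichotomy x 0 with hx0 | hx0 | hx0
      · have h1 : Real.arctan (-x)⁻¹ = π / 2 - Real.arctan (-x) :=
          Real.arctan_inv_of_pos (by linarith)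
        have h2 : Real.arctan (-x)⁻¹ ≤ (-x)⁻¹ :=
          arctan_le_self' (by rw [inv_nonneg]; linarith)
        rw [Real.arctan_neg] at h1
        have hxabs : |x| = -x := abs_of_neg hx0
        have hxpos : (0:ℝ) < -x := by linarith
        have hA : π / 2 + Real.arctan x ≤ (-x)⁻¹ := by linarith
        have hB : π / 2 - Real.arctan x ≤ π := by linarith
        have hfac : (1 / 4 - (Real.arctan x / π) ^ 2)
            = (π / 2 + Real.arctan x) * (π / 2 - Real.arctan x) / π ^ 2 := by
          field_simp; ring
        rw [hfac, hxabs]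
        have hApos : 0 ≤ π / 2 + Real.arctan x := by linarith
        have hBpos : 0 ≤ π / 2 - Real.arctan x := by linarith
        have hprod : (π / 2 + Real.arctan x) * (π / 2 - Real.arctan x) ≤ (-x)⁻¹ * π :=
          mul_le_mul hA hB hBpos (by positivity)
        calc (π / 2 + Real.arctan x) * (π / 2 - Real.arctan x) / π ^ 2 * (π * -x)
            ≤ (-x)⁻¹ * π / π ^ 2 * (π * -x) := by
              apply mul_le_mul_of_nonneg_right _ (by positivity)
              exact div_le_div_of_nonneg_right hprod (by positivity)
          _ = ((-x)⁻¹ * -x) * (π * π / π ^ 2) := by ring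
          _ = 1 := by
              rw [inv_mul_cancel₀ hxpos.ne', one_mul, pow_two]
              field_simp
      · subst hx0; simp
      · have h1 : Real.arctan x⁻¹ = π / 2 - Real.arctan x := Real.arctan_inv_of_pos hx0
        have h2 : Real.arctan x⁻¹ ≤ x⁻¹ := arctan_le_self' (by positivity)
        have hxabs : |x| = x := abs_of_pos hx0
        have hA : π / 2 - Real.arctan x ≤ x⁻¹ := by linarith
        have hB : π / 2 + Real.arctan x ≤ π := by linarith
        have hfac : (1 / 4 - (Real.arctan x / π) ^ 2)
            = (π / 2 - Real.arctan x) * (π / 2 + Real.arctan x) / π ^ 2 := by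
          field_simp; ring
        rw [hfac, hxabs]
        have hApos : 0 ≤ π / 2 - Real.arctan x := by linarith
        have hBpos : 0 ≤ π / 2 + Real.arctan x := by linarith
        have hprod : (π / 2 - Real.arctan x) * (π / 2 + Real.arctan x) ≤ x⁻¹ * π :=
          mul_le_mul hA hB hBpos (by positivity)
        calc (π / 2 - Real.arctan x) * (π / 2 + Real.arctan x) / π ^ 2 * (π * x)
            ≤ x⁻¹ * π / π ^ 2 * (π * x) := by
              apply mul_le_mul_of_nonneg_right _ (by positivity)
              exact div_le_div_of_nonneg_right hprod (by positivity)
          _ = (x⁻¹ * x) * (π * π / π ^ 2) := by ring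
          _ = 1 := by
              rw [inv_mul_cancel₀ hx0.ne', one_mul, pow_two]
              field_simp
    nlinarith [key]
  · intro x hx0
    rw [cauchy_deriv f hf x]
    have : (0:ℝ) < π * (1 + x ^ 2) ^ 2 := by positivity
    apply div_nonneg _ this.le
    linarith
  · intro x hx0
    rw [cauchy_deriv f hf x]
    have : (0:ℝ) < π * (1 + x ^ 2) ^ 2 := by positivity
    apply div_nonpos_of_nonpos_of_nonneg _ this.le
    linarith
end

section
/- Let f be a density on ℝ with CDF F such that f'(x) = −x·f(x) for x ∈ (−k₁, k₂) (Gaussian shape on the middle piece), F(−k₁) = f(−k₁)/k₁ =: α, and 1 − F(k₂) = f(k₂)/k₂ =: β. Then ∫_{−k₁}^{k₂} F(x) dx = k₂. -/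
open MeasureTheory Real Set

/-- If `f` is a density Gaussian-shaped on the middle piece (`f' = -x f` on `(-k₁, k₂)`),
with `F(−k₁) = f(−k₁)/k₁` and `1 − F(k₂) = f(k₂)/k₂`, then `∫_{−k₁}^{k₂} F = k₂`. -/
theorem stmt_8
    (k₁ k₂ : ℝ) (hk₁ : 0 < k₁) (hk₂ : 0 < k₂)
    (f F : ℝ → ℝ)
    (hfc : Continuous f) (hfpos : ∀ x, 0 ≤ f x)
    (hfint : Integrable f) (hnorm : (∫ x : ℝ, f x) = 1)
    (hF : ∀ x, F x = ∫ t in Set.Iic x, f t)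
    (hshape : ∀ x ∈ Set.Ioo (-k₁) k₂, HasDerivAt f (-x * f x) x)
    (hα : F (-k₁) = f (-k₁) / k₁)
    (hβ : 1 - F k₂ = f k₂ / k₂) :
    ∫ x in Set.Ioc (-k₁) k₂, F x = k₂ := by
  have hab : (-k₁) ≤ k₂ := by linarith
  -- F has derivative f everywhere
  have hFeq : ∀ y, F y = F 0 + ∫ t in (0:ℝ)..y, f t := by
    intro y
    have h := intervalIntegral.integral_Iic_sub_Iic (hfint.integrableOn) (hfint.integrableOn)
      (a := 0) (b := y)
    rw [hF y, hF 0]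
    linarith
  have hFder : ∀ x : ℝ, HasDerivAt F (f x) x := by
    intro x
    have h : HasDerivAt (fun y => F 0 + ∫ t in (0:ℝ)..y, f t) (f x) x := by
      exact (intervalIntegral.integral_hasDerivAt_right
        (hfint.intervalIntegrable) (hfc.stronglyMeasurableAtFilter _ _)
        hfc.continuousAt).const_add _
    exact (funext hFeq ▸ h : HasDerivAt F (f x) x)
  have hFc : Continuous F := by
    exact continuous_iff_continuousAt.2 fun x => (hFder x).continuousAt
  -- integration by parts: ∫ x f = k₂ F k₂ + k₁ F(-k₁) - ∫ F
  have hparts : ∫ x in (-k₁)..k₂, x * f x =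
      k₂ * F k₂ - (-k₁) * F (-k₁) - ∫ x in (-k₁)..k₂, 1 * F x := by
    apply intervalIntegral.integral_mul_deriv_eq_deriv_mul
      (u := fun x => x) (u' := fun _ => 1) (v := F) (v' := f)
    · intro x _; exact hasDerivAt_id x
    · intro x _; exact hFder x
    · exact intervalIntegrable_const
    · exact hfc.intervalIntegrable _ _
  -- ∫ x f = f(-k₁) - f(k₂) since (-f)' = x f on Ioo
  have hmid : ∫ x in (-k₁)..k₂, x * f x = (-f k₂) - (-f (-k₁)) := by
    apply intervalIntegral.integral_eq_sub_of_hasDeriv_right_of_le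
      (f := fun x => -f x) hab
    · exact (hfc.neg).continuousOn
    · intro x hx
      have := (hshape x hx).neg
      have h2 : HasDerivAt (fun y => -f y) (x * f x) x := by
        exact this.congr_deriv (by ring)
      exact h2.hasDerivWithinAt
    · exact (continuous_id.mul hfc).intervalIntegrable _ _
  have hInt : ∫ x in (-k₁)..k₂, 1 * F x = ∫ x in Set.Ioc (-k₁) k₂, F x := by
    simp [intervalIntegral.integral_of_le hab]
  rw [hmid] at hparts
  rw [hInt] at hparts
  have h1 : k₁ * F (-k₁) = f (-k₁) := by
    field_simp at hα; linarith
  have h2 : k₂ * F k₂ = k₂ - f k₂ := by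
    field_simp at hβ; linarith
  nlinarith [hparts]
end

section
/- Under the same hypotheses (f' = −xf on (−k₁,k₂), α = F(−k₁) = f(−k₁)/k₁, β = 1−F(k₂) = f(k₂)/k₂), the double integral ∫_{−k₁}^{k₂} ∫_{−k₁}^{k₂} F(min(x,y)) dx dy = k₂² + 1 − α − β. -/
open MeasureTheory Real Set

/-- Under the same hypotheses, `∫∫_{[-k₁,k₂]²} F(min(x,y)) dx dy = k₂² + 1 − α − β`,
where `α = F(−k₁)` and `β = 1 − F(k₂)`. -/
theorem stmt_9
    (k₁ k₂ : ℝ) (hk₁ : 0 < k₁) (hk₂ : 0 < k₂)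
    (f F : ℝ → ℝ)
    (hfc : Continuous f) (hfpos : ∀ x, 0 ≤ f x)
    (hfint : Integrable f) (hnorm : (∫ x : ℝ, f x) = 1)
    (hF : ∀ x, F x = ∫ t in Set.Iic x, f t)
    (hshape : ∀ x ∈ Set.Ioo (-k₁) k₂, HasDerivAt f (-x * f x) x)
    (α β : ℝ)
    (hα : α = F (-k₁)) (hα' : α = f (-k₁) / k₁)
    (hβ : β = 1 - F k₂) (hβ' : β = f k₂ / k₂) :
    ∫ x in Set.Ioc (-k₁) k₂, ∫ y in Set.Ioc (-k₁) k₂, F (min x y)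
      = k₂ ^ 2 + 1 - α - β := by
  have hab : (-k₁ : ℝ) ≤ k₂ := by linarith
  -- F has derivative f everywhere
  have hFeq : ∀ x : ℝ, F x = F 0 + ∫ t in (0:ℝ)..x, f t := by
    intro x
    rw [hF x, hF 0, ← intervalIntegral.integral_Iic_sub_Iic hfint.integrableOn
      hfint.integrableOn]
    ring
  have hFd : ∀ x : ℝ, HasDerivAt F (f x) x := by
    intro x
    have h : HasDerivAt (fun u => ∫ t in (0:ℝ)..u, f t) (f x) x :=
      intervalIntegral.integral_hasDerivAt_right (hfint.intervalIntegrable)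
        (hfc.stronglyMeasurable.stronglyMeasurableAtFilter) hfc.continuousAt
    have h2 := h.const_add (F 0)
    simpa [show (fun u => F 0 + ∫ t in (0:ℝ)..u, f t) = F from
      funext fun u => (hFeq u).symm] using h2
  have hFc : Continuous F := by
    rw [continuous_iff_continuousAt]; exact fun x => (hFd x).continuousAt
  -- endpoint values
  have hfk1 : f (-k₁) = α * k₁ := by field_simp at hα'; linarith
  have hfk2 : f k₂ = β * k₂ := by field_simp at hβ'; linarith
  have hFk2 : F k₂ = 1 - β := by linarith
  -- G
  set G : ℝ → ℝ := fun x => ∫ t in (-k₁)..x, F t with hGdef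
  have hGd : ∀ x : ℝ, HasDerivAt G (F x) x := fun x =>
    intervalIntegral.integral_hasDerivAt_right (hFc.intervalIntegrable _ _)
      (hFc.stronglyMeasurable.stronglyMeasurableAtFilter) hFc.continuousAt
  -- inner integral
  have inner : ∀ x ∈ Set.Ioc (-k₁) k₂,
      (∫ y in Set.Ioc (-k₁) k₂, F (min x y)) = G x + F x * (k₂ - x) := by
    intro x hx
    have hmin : Continuous fun y : ℝ => F (min x y) :=
      hFc.comp (continuous_const.min continuous_id)
    have h1 : Set.Ioc (-k₁) x ∪ Set.Ioc x k₂ = Set.Ioc (-k₁) k₂ :=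
      Set.Ioc_union_Ioc_eq_Ioc hx.1.le hx.2
    rw [← h1, MeasureTheory.setIntegral_union (Set.Ioc_disjoint_Ioc_of_le le_rfl)
      measurableSet_Ioc (hmin.integrableOn_Ioc) (hmin.integrableOn_Ioc)]
    have e1 : (∫ y in Set.Ioc (-k₁) x, F (min x y)) = G x := by
      show _ = ∫ t in (-k₁)..x, F t
      rw [intervalIntegral.integral_of_le hx.1.le]
      exact setIntegral_congr_fun measurableSet_Ioc fun y hy => by
        rw [min_eq_right hy.2]
    have e2 : (∫ y in Set.Ioc x k₂, F (min x y)) = F x * (k₂ - x) := by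
      rw [setIntegral_congr_fun measurableSet_Ioc
        (fun y (hy : y ∈ Set.Ioc x k₂) => by rw [min_eq_left hy.1.le])]
      rw [setIntegral_const, measureReal_def, Real.volume_Ioc, ENNReal.toReal_ofReal
        (by linarith [hx.2] : (0:ℝ) ≤ k₂ - x), smul_eq_mul, mul_comm]
    rw [e1, e2]
  rw [setIntegral_congr_fun measurableSet_Ioc inner,
    ← intervalIntegral.integral_of_le hab]
  -- split
  have hGc : Continuous G := by
    rw [continuous_iff_continuousAt]; exact fun x => (hGd x).continuousAt
  have hFk : Continuous fun x => F x * (k₂ - x) :=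
    hFc.mul (continuous_const.sub continuous_id)
  rw [intervalIntegral.integral_add (hGc.intervalIntegrable _ _)
    (hFk.intervalIntegrable _ _)]
  -- ∫ G = J via integration by parts
  have hGint : (∫ x in (-k₁)..k₂, G x) = ∫ x in (-k₁)..k₂, F x * (k₂ - x) := by
    have hparts := intervalIntegral.integral_mul_deriv_eq_deriv_mul
      (u := G) (v := fun x => x - k₂) (u' := F) (v' := fun _ => (1:ℝ))
      (a := -k₁) (b := k₂)
      (fun x _ => hGd x) (fun x _ => (hasDerivAt_id x).sub_const k₂)
      (hFc.intervalIntegrable _ _) (intervalIntegrable_const)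
    simp only [mul_one, sub_self, mul_zero] at hparts
    have hG0 : G (-k₁) = 0 := intervalIntegral.integral_same
    rw [hG0] at hparts
    rw [hparts]
    simp only [zero_mul, sub_zero, zero_sub]
    rw [← intervalIntegral.integral_neg]
    apply intervalIntegral.integral_congr
    intro x _
    ring
  rw [hGint]
  -- J via FTC with explicit antiderivative
  have hJ : (∫ x in (-k₁)..k₂, F x * (k₂ - x)) = (k₂ ^ 2 + 1 - α - β) / 2 := by
    set Φ : ℝ → ℝ := fun x =>
      (-(F x * (k₂ - x) ^ 2) + (k₂ ^ 2 + 1) * F x + 2 * k₂ * f x - x * f x) / 2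
      with hΦdef
    have hΦd : ∀ x ∈ Set.Ioo (-k₁) k₂, HasDerivAt Φ (F x * (k₂ - x)) x := by
      intro x hx
      have hf' := hshape x hx
      have hF' := hFd x
      have h1 : HasDerivAt (fun x => F x * (k₂ - x) ^ 2)
          (f x * (k₂ - x) ^ 2 + F x * (2 * (k₂ - x) ^ 1 * (-1))) x :=
        hF'.mul (((hasDerivAt_id x).const_sub k₂).pow 2)
      have h2 : HasDerivAt (fun x => x * f x) (1 * f x + x * (-x * f x)) x :=
        (hasDerivAt_id x).mul hf'
      have h := (((h1.neg.add (hF'.const_mul (k₂ ^ 2 + 1))).add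
        (hf'.const_mul (2 * k₂))).sub h2).div_const 2
      refine h.congr_deriv ?_
      ring
    have hΦc : Continuous Φ := by
      apply Continuous.div_const
      exact (((hFc.mul ((continuous_const.sub continuous_id).pow 2)).neg.add
        (continuous_const.mul hFc)).add (continuous_const.mul hfc)).sub
        (continuous_id.mul hfc)
    rw [intervalIntegral.integral_eq_sub_of_hasDerivAt_of_le hab
      hΦc.continuousOn hΦd (hFk.intervalIntegrable _ _)]
    rw [hΦdef]
    simp only
    rw [hfk1, hfk2, hFk2, ← hα]
    ring
  rw [hJ]
  ring
end

section
/- For the extended Huber family, the asymptotic variance of the (α,β)-trimmed mean attains the information bound: with α = F(−k₁), β = 1 − F(k₂), σ² := (1−α−β)⁻² · ∫_{−k₁}^{k₂}∫_{−k₁}^{k₂} (F(min(x,y)) − F(x)F(y)) dx dy = (1 − α − β)⁻¹ = I(f)⁻¹. -/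
open MeasureTheory Real Set

/-- For the extended Huber family, the asymptotic variance of the (α,β)-trimmed mean
attains the information bound:
`(1−α−β)⁻² ∫∫ (F(min(x,y)) − F(x)F(y)) dx dy = (1−α−β)⁻¹ = I(f)⁻¹`, where
`I(f) = ∫_{−k₁}^{k₂} f` is the Fisher information for location. -/
theorem stmt_10
    (k₁ k₂ : ℝ) (hk₁ : 0 < k₁) (hk₂ : 0 < k₂)
    (f F : ℝ → ℝ)
    (hfc : Continuous f) (hfpos : ∀ x, 0 ≤ f x)
    (hfint : Integrable f) (hnorm : (∫ x : ℝ, f x) = 1)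
    (hF : ∀ x, F x = ∫ t in Set.Iic x, f t)
    (hshape : ∀ x ∈ Set.Ioo (-k₁) k₂, HasDerivAt f (-x * f x) x)
    (α β : ℝ)
    (hα : α = F (-k₁)) (hα' : α = f (-k₁) / k₁)
    (hβ : β = 1 - F k₂) (hβ' : β = f k₂ / k₂)
    (I : ℝ) (hI : I = ∫ x in Set.Ioc (-k₁) k₂, f x) :
    (1 - α - β)⁻¹ ^ 2 *
        (∫ x in Set.Ioc (-k₁) k₂, ∫ y in Set.Ioc (-k₁) k₂, (F (min x y) - F x * F y))
      = (1 - α - β)⁻¹ ∧ (1 - α - β)⁻¹ = I⁻¹ := by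
  have hab : (-k₁ : ℝ) ≤ k₂ := by linarith
  -- F as an interval integral
  have hFx : ∀ x y : ℝ, F y - F x = ∫ t in x..y, f t := by
    intro x y
    rw [hF, hF]
    exact intervalIntegral.integral_Iic_sub_Iic hfint.integrableOn hfint.integrableOn
  have hFeq : F = fun u => F 0 + ∫ t in (0:ℝ)..u, f t := by
    funext u
    have := hFx 0 u
    linarith
  have hFd : ∀ x : ℝ, HasDerivAt F (f x) x := by
    intro x
    rw [hFeq]
    exact (intervalIntegral.integral_hasDerivAt_right (hfc.intervalIntegrable _ _)
      (hfc.stronglyMeasurableAtFilter _ _) hfc.continuousAt).const_add _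
  have hFc : Continuous F := continuous_iff_continuousAt.mpr fun x => (hFd x).continuousAt
  -- endpoint values
  have hFa : F (-k₁) = α := hα.symm
  have hFb : F k₂ = 1 - β := by linarith
  have hfa : f (-k₁) = k₁ * α := by
    field_simp at hα'; linarith
  have hfb : f k₂ = k₂ * β := by
    field_simp at hβ'; linarith
  -- I = 1 - α - β
  have hIval : I = 1 - α - β := by
    rw [hI, ← intervalIntegral.integral_of_le hab, ← hFx, hFa, hFb]
    ring
  -- E1 : ∫ F
  have E2 : (∫ x in (-k₁)..k₂, F x) = k₂ := by
    have := intervalIntegral.integral_eq_sub_of_hasDerivAt_of_le (f := fun x => x * F x + f x)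
      (f' := F) hab (by fun_prop) (fun x hx => by
        have h1 := ((hasDerivAt_id x).mul (hFd x)).add (hshape x hx)
        convert h1 using 1; rfl; simp only [id_eq]; ring)
      (hFc.intervalIntegrable _ _)
    rw [this]; simp only [hFa, hFb, hfa, hfb]; ring
  have E3 : (∫ x in (-k₁)..k₂, x * F x) = (k₂ ^ 2 - I) / 2 := by
    have := intervalIntegral.integral_eq_sub_of_hasDerivAt_of_le
      (f := fun x => ((x ^ 2 - 1) * F x + x * f x) / 2)
      (f' := fun x => x * F x) hab (by fun_prop) (fun x hx => by
        have h1 := (((((hasDerivAt_pow 2 x).sub_const 1).mul (hFd x)).add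
          ((hasDerivAt_id x).mul (hshape x hx))).div_const 2)
        convert h1 using 1; rfl; rfl; simp only [id_eq]; push_cast; ring)
      ((continuous_id.mul hFc).intervalIntegrable _ _)
    rw [this]; simp only [hFa, hFb, hfa, hfb, hIval]; ring
  -- G and its integral
  set G : ℝ → ℝ := fun x => ∫ t in (-k₁)..x, F t with hGdef
  have hGd : ∀ x : ℝ, HasDerivAt G (F x) x := fun x =>
    intervalIntegral.integral_hasDerivAt_right (hFc.intervalIntegrable _ _)
      (hFc.stronglyMeasurableAtFilter _ _) hFc.continuousAt
  have hGc : Continuous G := continuous_iff_continuousAt.mpr fun x => (hGd x).continuousAt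
  have hGa : G (-k₁) = 0 := intervalIntegral.integral_same
  have hGb : G k₂ = k₂ := E2
  have E4 : (∫ x in (-k₁)..k₂, G x) = (k₂ ^ 2 + I) / 2 := by
    have := intervalIntegral.integral_eq_sub_of_hasDerivAt_of_le
      (f := fun x => x * G x - ((x ^ 2 - 1) * F x + x * f x) / 2)
      (f' := G) hab (by fun_prop) (fun x hx => by
        have h1 := (((hasDerivAt_id x).mul (hGd x)).sub
          ((((((hasDerivAt_pow 2 x).sub_const 1).mul (hFd x)).add
            ((hasDerivAt_id x).mul (hshape x hx))).div_const 2)))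
        convert h1 using 1; rfl; simp only [id_eq]; push_cast; ring)
      (hGc.intervalIntegrable _ _)
    rw [this]; beta_reduce; rw [hGa, hGb, hFa, hFb, hfa, hfb, hIval]; ring
  -- the inner integral
  have hFminc : ∀ x : ℝ, Continuous (fun y => F (min x y)) := fun x =>
    hFc.comp (continuous_const.min continuous_id)
  have inner : ∀ x ∈ Set.Ioc (-k₁) k₂,
      (∫ y in Set.Ioc (-k₁) k₂, (F (min x y) - F x * F y)) = G x - x * F x := by
    intro x hx
    obtain ⟨hx1, hx2⟩ := hx
    have hsplit : (∫ y in Set.Ioc (-k₁) k₂, F (min x y)) = G x + (k₂ - x) * F x := by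
      rw [← Set.Ioc_union_Ioc_eq_Ioc hx1.le hx2,
        setIntegral_union (Set.Ioc_disjoint_Ioc_of_le le_rfl) measurableSet_Ioc
          ((hFminc x).integrableOn_Ioc) ((hFminc x).integrableOn_Ioc)]
      have h1 : (∫ y in Set.Ioc (-k₁) x, F (min x y)) = G x := by
        rw [setIntegral_congr_fun measurableSet_Ioc
          (fun y hy => by simp [min_eq_right hy.2] : EqOn (fun y => F (min x y)) F _)]
        rw [hGdef]
        exact (intervalIntegral.integral_of_le hx1.le).symm
      have h2 : (∫ y in Set.Ioc x k₂, F (min x y)) = (k₂ - x) * F x := by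
        rw [setIntegral_congr_fun measurableSet_Ioc
          (fun y hy => by simp [min_eq_left hy.1.le] : EqOn (fun y => F (min x y)) (fun _ => F x) _)]
        simp [Real.volume_Ioc, ENNReal.toReal_ofReal (by linarith : (0:ℝ) ≤ k₂ - x), hx2]
      rw [h1, h2]
    have hint1 : IntegrableOn (fun y => F (min x y)) (Set.Ioc (-k₁) k₂) :=
      (hFminc x).integrableOn_Ioc
    have hint2 : IntegrableOn (fun y => F x * F y) (Set.Ioc (-k₁) k₂) :=
      (continuous_const.mul hFc).integrableOn_Ioc
    rw [integral_sub hint1 hint2, hsplit, integral_const_mul,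
      ← intervalIntegral.integral_of_le hab, E2]
    ring
  -- the double integral equals I
  have houter : (∫ x in Set.Ioc (-k₁) k₂,
      ∫ y in Set.Ioc (-k₁) k₂, (F (min x y) - F x * F y)) = I := by
    rw [setIntegral_congr_fun measurableSet_Ioc
      (fun x hx => inner x hx : EqOn _ (fun x => G x - x * F x) _),
      ← intervalIntegral.integral_of_le hab,
      intervalIntegral.integral_sub (hGc.intervalIntegrable _ _)
        ((show Continuous fun x : ℝ => x * F x from continuous_id.mul hFc).intervalIntegrable _ _),
      E4, E3]
    ring
  refine ⟨?_, by rw [hIval]⟩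
  rw [houter, hIval]
  rcases eq_or_ne (1 - α - β) 0 with h | h
  · simp [h]
  · field_simp
end

section
/- Let S be a real random variable with positive variance, α, β ∈ (0,1) with α + β < 1, k₁, k₂ > 0, and suppose E[S] = (k₁α − k₂β)/(1−α−β) and E[S²] = (1−α−β − k₁²α − k₂²β)/(1−α−β). Then the 2×2 symmetric matrix M with entries M₁₁ = (1−α)/(k₁²α) − 1/(1−α−β), M₂₂ = (1−β)/(k₂²β) − 1/(1−α−β), M₁₂ = M₂₁ = 1/(k₁k₂) − 1/(1−α−β) has determinant det M = (1−α−β)·Var(S)/(k₁²k₂²αβ) > 0. -/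
open MeasureTheory Real Set Matrix

/-- The algebraic core of the strict convexity of the trimmed-mean asymptotic variance:
the determinant of the Hessian-type matrix equals `(1−α−β)·Var(S)/(k₁²k₂²αβ) > 0`. -/
theorem stmt_11
    {Ω : Type*} [MeasurableSpace Ω] (μ : Measure Ω) [IsProbabilityMeasure μ]
    (S : Ω → ℝ) (hS1 : Integrable S μ) (hS2 : Integrable (fun ω => S ω ^ 2) μ)
    (α β k₁ k₂ : ℝ)
    (hα : α ∈ Set.Ioo (0 : ℝ) 1) (hβ : β ∈ Set.Ioo (0 : ℝ) 1) (hαβ : α + β < 1)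
    (hk₁ : 0 < k₁) (hk₂ : 0 < k₂)
    (hvar : 0 < (∫ ω, S ω ^ 2 ∂μ) - (∫ ω, S ω ∂μ) ^ 2)
    (hmean : (∫ ω, S ω ∂μ) = (k₁ * α - k₂ * β) / (1 - α - β))
    (hsq : (∫ ω, S ω ^ 2 ∂μ) = (1 - α - β - k₁ ^ 2 * α - k₂ ^ 2 * β) / (1 - α - β))
    (M : Matrix (Fin 2) (Fin 2) ℝ)
    (hM : M = !![(1 - α) / (k₁ ^ 2 * α) - 1 / (1 - α - β), 1 / (k₁ * k₂) - 1 / (1 - α - β);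
                 1 / (k₁ * k₂) - 1 / (1 - α - β), (1 - β) / (k₂ ^ 2 * β) - 1 / (1 - α - β)]) :
    M.det = (1 - α - β) * ((∫ ω, S ω ^ 2 ∂μ) - (∫ ω, S ω ∂μ) ^ 2) / (k₁ ^ 2 * k₂ ^ 2 * α * β)
      ∧ 0 < M.det := by
  obtain ⟨hα0, hα1⟩ := hα
  obtain ⟨hβ0, hβ1⟩ := hβ
  have hγ : 0 < 1 - α - β := by linarith
  have hdet : M.det = (1 - α - β) * ((∫ ω, S ω ^ 2 ∂μ) - (∫ ω, S ω ∂μ) ^ 2) / (k₁ ^ 2 * k₂ ^ 2 * α * β) := by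
    rw [hM, Matrix.det_fin_two_of, hmean, hsq]
    field_simp
    ring
  refine ⟨hdet, hdet ▸ ?_⟩
  positivity
end

section
/- For real a < 0 with i ≥ 2 − a (i a positive integer, i ≤ n), there exist constants C₁, C₂ > 0 depending only on a such that C₁·(i/n)^a ≤ E[U_{(i)}^a] ≤ C₂·(i/n)^a, where U_{(i)} ~ Beta(i, n+1−i). -/
/-!
Evaluating the Beta integral turns the moment into the finite product
`E[U_{(i)}^a] = ∏_{j=0}^{n-i} (i+j)/(i+a+j)`. Comparing through `exp (-a/x)` and `exp (-a/(x+a))`,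
each factor `x/(x+a)` lies between `((x+1)/x)^(-a)` and `((x+a)/(x+a-1))^(-a)`, and these bounds
telescope to `((n+1)/i)^(-a)` and `((n+a)/(i+a-1))^(-a)`. Both are within constant factors of
`(n/i)^(-a) = (i/n)^a` once `i ≥ 2 - a`, which keeps `i + a - 1` comparable to `i`.
-/

open MeasureTheory Real Set
open scoped Nat

noncomputable def uniformOrderStatDensity (n i : ℕ) (u : ℝ) : ℝ :=
  u ^ (i - 1) * (1 - u) ^ (n - i) * ((n ! : ℝ) / ((i - 1)! * (n - i)!))

theorem integral_rpow_mul_one_sub_pow {p : ℝ} (hp : 0 < p) (k : ℕ) :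
    ∫ u in Ioo (0 : ℝ) 1, u ^ (p - 1) * (1 - u) ^ k =
      k ! / ∏ j ∈ Finset.range (k + 1), (p + j) := by
  have hbeta := Complex.betaIntegral_eval_nat_add_one_right (u := p) (by simpa using hp) k
  have hcast : Complex.betaIntegral p (k + 1) =
      ((∫ u in Ioo (0 : ℝ) 1, u ^ (p - 1) * (1 - u) ^ k : ℝ) : ℂ) := by
    rw [Complex.betaIntegral, intervalIntegral.integral_of_le zero_le_one,
      integral_Ioc_eq_integral_Ioo, ← integral_complex_ofReal]
    refine setIntegral_congr_fun measurableSet_Ioo fun u hu => ?_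
    rw [add_sub_cancel_right, ← Complex.ofReal_one, ← Complex.ofReal_sub,
      ← Complex.ofReal_cpow hu.1.le, Complex.cpow_natCast]
    push_cast
    ring
  rw [hcast] at hbeta
  exact_mod_cast hbeta

theorem integral_rpow_mul_uniformOrderStatDensity {n i : ℕ} {a : ℝ} (hi : 1 ≤ i) (hin : i ≤ n)
    (hia : 0 < i + a) :
    ∫ u in Ioo (0 : ℝ) 1, u ^ a * uniformOrderStatDensity n i u =
      ∏ j ∈ Finset.range (n - i + 1), ((i + j : ℝ) / (i + a + j)) := by
  obtain ⟨m, rfl⟩ := Nat.exists_eq_add_of_le' hi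
  obtain ⟨k, rfl⟩ := Nat.exists_eq_add_of_le hin
  have hfact : ((m + 1 + k)! : ℝ) = m ! * ∏ j ∈ Finset.range (k + 1), (m + 1 + j : ℝ) := by
    rw [show m + 1 + k = m + (k + 1) by ring, ← Nat.factorial_mul_ascFactorial,
      Nat.ascFactorial_eq_prod_range]
    push_cast
    rfl
  have hintegrand : ∀ u ∈ Ioo (0 : ℝ) 1, u ^ a * uniformOrderStatDensity (m + 1 + k) (m + 1) u =
      u ^ ((m + 1 + a : ℝ) - 1) * (1 - u) ^ k * ((m + 1 + k)! / (m ! * k !)) := by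
    intro u hu
    simp only [uniformOrderStatDensity, Nat.add_sub_cancel, Nat.add_sub_cancel_left]
    rw [show (m + 1 + a : ℝ) - 1 = a + m by ring, rpow_add hu.1, rpow_natCast]
    ring
  have hprod : 0 < ∏ j ∈ Finset.range (k + 1), ((m + 1 : ℕ) + a + j : ℝ) :=
    Finset.prod_pos fun j _ => by positivity
  rw [setIntegral_congr_fun measurableSet_Ioo hintegrand, integral_mul_const,
    integral_rpow_mul_one_sub_pow (by exact_mod_cast hia) k, hfact, Nat.add_sub_cancel_left,
    Finset.prod_div_distrib]
  push_cast at hprod ⊢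
  field_simp

theorem rpow_add_one_div_le_div_add {a x : ℝ} (ha : a ≤ 0) (hxa : 0 < x + a) :
    ((x + 1) / x) ^ (-a) ≤ x / (x + a) := by
  have hx : 0 < x := by linarith
  have hlog : log (1 + 1 / x) ≤ 1 / x := by
    linarith [log_le_sub_one_of_pos (show 0 < 1 + 1 / x by positivity)]
  calc ((x + 1) / x) ^ (-a) = exp (log (1 + 1 / x) * -a) := by
        rw [rpow_def_of_pos (by positivity), add_div, div_self hx.ne']
    _ ≤ exp (1 / x * -a) := by gcongr; linarith
    _ ≤ 1 / (1 - 1 / x * -a) := by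
        refine exp_bound_div_one_sub_of_interval (mul_nonneg (by positivity) (by linarith)) ?_
        rw [one_div_mul_eq_div, div_lt_one hx]
        linarith
    _ = x / (x + a) := by field_simp [hxa.ne']; ring

theorem div_add_le_rpow_div_sub_one {a x : ℝ} (ha : a ≤ 0) (hxa : 1 < x + a) :
    x / (x + a) ≤ ((x + a) / (x + a - 1)) ^ (-a) := by
  have hy : 0 < x + a - 1 := by linarith
  have hlog : 1 / (x + a) ≤ log ((x + a) / (x + a - 1)) := by
    calc 1 / (x + a) = 1 - ((x + a) / (x + a - 1))⁻¹ := by field_simp; ring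
      _ ≤ _ := one_sub_inv_le_log_of_pos (by positivity)
  calc x / (x + a) = 1 / (x + a) * -a + 1 := by field_simp; ring
    _ ≤ exp (1 / (x + a) * -a) := add_one_le_exp _
    _ ≤ exp (log ((x + a) / (x + a - 1)) * -a) := by gcongr; linarith
    _ = ((x + a) / (x + a - 1)) ^ (-a) := (rpow_def_of_pos (by positivity) _).symm

theorem prod_range_add_one_div_add {c : ℝ} (hc : 0 < c) (m : ℕ) :
    ∏ j ∈ Finset.range m, (c + j + 1) / (c + j) = (c + m) / c := by
  induction m with
  | zero => simp [hc.ne']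
  | succ m ih =>
    rw [Finset.prod_range_succ, ih]
    have : c + m ≠ 0 := by positivity
    push_cast
    field_simp
    ring

theorem rpow_add_div_le_prod_div_add {a x : ℝ} (ha : a ≤ 0) (hxa : 0 < x + a) (m : ℕ) :
    ((x + m) / x) ^ (-a) ≤ ∏ j ∈ Finset.range m, (x + j) / (x + a + j) := by
  have hx : 0 < x := by linarith
  rw [← prod_range_add_one_div_add hx, ← finsetProd_rpow _ _ fun j _ => by positivity]
  refine Finset.prod_le_prod (fun j _ => by positivity) fun j _ => ?_
  rw [add_right_comm x a]
  exact rpow_add_one_div_le_div_add ha (by linarith [Nat.cast_nonneg (α := ℝ) j])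

theorem prod_div_add_le_rpow_add_div {a x : ℝ} (ha : a ≤ 0) (hxa : 1 < x + a) (m : ℕ) :
    ∏ j ∈ Finset.range m, (x + j) / (x + a + j) ≤ ((x + a - 1 + m) / (x + a - 1)) ^ (-a) := by
  have hc : 0 < x + a - 1 := by linarith
  rw [← prod_range_add_one_div_add hc, ← finsetProd_rpow _ _ fun j _ => by positivity]
  refine Finset.prod_le_prod (fun j _ => div_nonneg (by linarith) (by positivity)) fun j _ => ?_
  rw [add_right_comm x a, show x + a - 1 + j + 1 = x + j + a by ring,
    show x + a - 1 + j = x + j + a - 1 by ring]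
  exact div_add_le_rpow_div_sub_one ha (by linarith [Nat.cast_nonneg (α := ℝ) j])

/-- Two-sided bounds on the moments of uniform order statistics: for `a < 0` there are
constants `C₁, C₂ > 0` depending only on `a` with
`C₁ (i/n)^a ≤ E[U_{(i)}^a] ≤ C₂ (i/n)^a` whenever `i ≥ 2 − a`. -/
theorem stmt_13
    (a : ℝ) (ha : a < 0) :
    ∃ C₁ > (0 : ℝ), ∃ C₂ > (0 : ℝ), ∀ n i : ℕ, 1 ≤ i → i ≤ n → (2 : ℝ) - a ≤ (i : ℝ) →
      C₁ * ((i : ℝ) / (n : ℝ)) ^ a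
        ≤ ∫ u in Set.Ioo (0 : ℝ) 1,
            u ^ a * (u ^ (i - 1) * (1 - u) ^ (n - i) *
              ((n.factorial : ℝ) / ((i - 1).factorial * (n - i).factorial)))
      ∧ ∫ u in Set.Ioo (0 : ℝ) 1,
            u ^ a * (u ^ (i - 1) * (1 - u) ^ (n - i) *
              ((n.factorial : ℝ) / ((i - 1).factorial * (n - i).factorial)))
        ≤ C₂ * ((i : ℝ) / (n : ℝ)) ^ a := by
  refine ⟨1, one_pos, (2 - a) ^ (-a), rpow_pos_of_pos (by linarith) _,
    fun n i hi hin hia => ?_⟩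
  have hi0 : (0 : ℝ) < i := by linarith
  have hmoment := integral_rpow_mul_uniformOrderStatDensity hi hin (a := a) (by linarith)
  have hlen : ((n - i + 1 : ℕ) : ℝ) = n - i + 1 := by push_cast [Nat.cast_sub hin]; ring
  have hpow : ((i : ℝ) / n) ^ a = ((n : ℝ) / i) ^ (-a) := by
    rw [rpow_neg (by positivity), ← inv_rpow (by positivity), inv_div]
  refine ⟨le_of_le_of_eq ?_ hmoment.symm, le_of_eq_of_le hmoment ?_⟩
  · calc 1 * ((i : ℝ) / n) ^ a ≤ ((i + ((n - i + 1 : ℕ) : ℝ)) / i) ^ (-a) := by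
          rw [one_mul, hpow, hlen]
          gcongr <;> linarith
      _ ≤ _ := rpow_add_div_le_prod_div_add ha.le (by linarith) _
  · have hratio : (i + a - 1 + ((n - i + 1 : ℕ) : ℝ)) / (i + a - 1) ≤ (2 - a) * (n / i) := by
      rw [hlen, div_le_iff₀ (by linarith), mul_div_assoc', div_mul_eq_mul_div, le_div_iff₀ hi0]
      have hden : (i : ℝ) ≤ (2 - a) * (i + a - 1) := by nlinarith
      nlinarith [mul_le_mul_of_nonneg_right hden (by linarith : (0 : ℝ) ≤ n)]
    calc _ ≤ ((i + a - 1 + ((n - i + 1 : ℕ) : ℝ)) / (i + a - 1)) ^ (-a) :=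
          prod_div_add_le_rpow_add_div ha.le (by linarith) _
      _ ≤ ((2 - a) * (n / i)) ^ (-a) := by
          gcongr
          · rw [hlen]; exact div_nonneg (by linarith) (by linarith)
          · linarith
      _ = (2 - a) ^ (-a) * ((i : ℝ) / n) ^ a := by
          rw [hpow, mul_rpow (by linarith) (by positivity)]
end

section
/- Let X be a real random variable with CDF F, density f > 0, and finite variance. Then ∫₀¹∫₀¹ (min(s,t) − st)/(f(F⁻¹(s)) f(F⁻¹(t))) ds dt = Var(X). -/
open MeasureTheory Real Set Filter Topology

/-- Hoeffding-type identity: for a random variable with density `f > 0`, CDF `F`,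
quantile function `F⁻¹` and finite variance,
`∫₀¹∫₀¹ (min(s,t) − st)/(f(F⁻¹(s)) f(F⁻¹(t))) ds dt = Var(X)`. -/
theorem stmt_16
    (F f Finv : ℝ → ℝ)
    (hF : ∀ x, HasDerivAt F (f x) x)
    (hfpos : ∀ x, 0 < f x)
    (hnorm : (∫ x : ℝ, f x) = 1)
    (hFinv : ∀ t ∈ Set.Ioo (0 : ℝ) 1, F (Finv t) = t)
    (hm1 : Integrable (fun x => x * f x))
    (hm2 : Integrable (fun x => x ^ 2 * f x)) :
    ∫ s in Set.Ioo (0 : ℝ) 1, ∫ t in Set.Ioo (0 : ℝ) 1,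
        (min s t - s * t) / (f (Finv s) * f (Finv t))
      = (∫ x : ℝ, x ^ 2 * f x) - (∫ x : ℝ, x * f x) ^ 2 := by
  have hf0 : ∀ x, (0:ℝ) ≤ f x := fun x => (hfpos x).le
  have hfint : Integrable f := by
    by_contra h
    rw [integral_undef h] at hnorm; norm_num at hnorm
  have hfm : Measurable f := by
    have hfd : f = deriv F := funext fun x => ((hF x).deriv).symm
    rw [hfd]; exact measurable_deriv F
  have hFcont : Continuous F :=
    continuous_iff_continuousAt.2 fun x => (hF x).continuousAt
  have hFmono : StrictMono F := strictMono_of_deriv_pos fun x => by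
    rw [(hF x).deriv]; exact hfpos x
  have habs : Integrable (fun u => |u| * f u) := by
    refine hm1.norm.congr (Filter.Eventually.of_forall fun u => ?_)
    simp [Real.norm_eq_abs, abs_mul, abs_of_nonneg (hf0 u)]
  -- FTC
  have hFTC : ∀ a b : ℝ, ∫ u in a..b, f u = F b - F a := fun a b =>
    intervalIntegral.integral_eq_sub_of_hasDerivAt (fun u _ => hF u)
      (hfint.intervalIntegrable)
  -- tail limits of integrals of integrable functions
  have htail_bot : ∀ g : ℝ → ℝ, Integrable g →
      Tendsto (fun a => ∫ u in Iic a, g u) atBot (𝓝 0) := by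
    intro g hg
    have h1 : Tendsto (fun a : ℝ => ∫ u in a..(0:ℝ), g u) atBot
        (𝓝 (∫ u in Iic (0:ℝ), g u)) :=
      intervalIntegral_tendsto_integral_Iic 0 hg.integrableOn tendsto_id
    have h2 : (fun a => ∫ u in Iic a, g u)
        = fun a => (∫ u in Iic (0:ℝ), g u) - ∫ u in a..(0:ℝ), g u := by
      funext a
      rw [← intervalIntegral.integral_Iic_sub_Iic hg.integrableOn hg.integrableOn]
      ring
    rw [h2]
    simpa using h1.const_sub (∫ u in Iic (0:ℝ), g u)
  have htail_top : ∀ g : ℝ → ℝ, Integrable g →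
      Tendsto (fun b => ∫ u in Ioi b, g u) atTop (𝓝 0) := by
    intro g hg
    have h1 : Tendsto (fun b : ℝ => ∫ u in (0:ℝ)..b, g u) atTop
        (𝓝 (∫ u in Ioi (0:ℝ), g u)) :=
      intervalIntegral_tendsto_integral_Ioi 0 hg.integrableOn tendsto_id
    have hc : ∀ b : ℝ, (∫ u in Iic b, g u) + ∫ u in Ioi b, g u = ∫ u, g u := by
      intro b
      have := integral_add_compl (measurableSet_Iic (a := b)) hg (f := g)
      rwa [compl_Iic] at this
    have h2 : (fun b => ∫ u in Ioi b, g u)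
        = fun b => (∫ u in Ioi (0:ℝ), g u) - ∫ u in (0:ℝ)..b, g u := by
      funext b
      have h3 := intervalIntegral.integral_Iic_sub_Iic
        (hg.integrableOn (s := Iic (0:ℝ))) (hg.integrableOn (s := Iic b))
      have h4 := hc b
      have h5 := hc 0
      linarith
    rw [h2]
    simpa using h1.const_sub (∫ u in Ioi (0:ℝ), g u)
  -- limits of F
  have hFbot : Tendsto F atBot (𝓝 (F 0 - ∫ u in Iic (0:ℝ), f u)) := by
    have h1 : Tendsto (fun a : ℝ => ∫ u in a..(0:ℝ), f u) atBot
        (𝓝 (∫ u in Iic (0:ℝ), f u)) :=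
      intervalIntegral_tendsto_integral_Iic 0 hfint.integrableOn tendsto_id
    have h2 : F = fun a => F 0 - ∫ u in a..(0:ℝ), f u := by
      funext a; rw [hFTC]; ring
    nth_rewrite 1 [h2]
    exact tendsto_const_nhds.sub h1
  have hsum : (∫ u in Iic (0:ℝ), f u) + ∫ u in Ioi (0:ℝ), f u = 1 := by
    have := integral_add_compl (measurableSet_Iic (a := (0:ℝ))) hfint (f := f)
    rw [compl_Iic] at this
    rw [this, hnorm]
  have hFtop : Tendsto F atTop (𝓝 ((F 0 - ∫ u in Iic (0:ℝ), f u) + 1)) := by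
    have h1 : Tendsto (fun b : ℝ => ∫ u in (0:ℝ)..b, f u) atTop
        (𝓝 (∫ u in Ioi (0:ℝ), f u)) :=
      intervalIntegral_tendsto_integral_Ioi 0 hfint.integrableOn tendsto_id
    have h2 : F = fun b => F 0 + ∫ u in (0:ℝ)..b, f u := by
      funext b; rw [hFTC]; ring
    nth_rewrite 1 [h2]
    have : (F 0 - ∫ u in Iic (0:ℝ), f u) + 1 = F 0 + ∫ u in Ioi (0:ℝ), f u := by
      linarith
    rw [this]
    exact tendsto_const_nhds.add h1
  set L : ℝ := F 0 - ∫ u in Iic (0:ℝ), f u with hLdef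
  have hlow : ∀ x, L < F x := by
    intro x
    have h1 : L ≤ F (x - 1) := by
      refine le_of_tendsto hFbot ?_
      filter_upwards [eventually_le_atBot (x - 1)] with a ha
      exact hFmono.monotone ha
    have h2 : F (x - 1) < F x := hFmono (by linarith)
    linarith
  have hhigh : ∀ x, F x < L + 1 := by
    intro x
    have h1 : F (x + 1) ≤ L + 1 := by
      refine ge_of_tendsto hFtop ?_
      filter_upwards [eventually_ge_atTop (x + 1)] with a ha
      exact hFmono.monotone ha
    have h2 : F x < F (x + 1) := hFmono (by linarith)
    linarith
  have hL0 : L = 0 := by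
    rcases lt_trichotomy L 0 with h | h | h
    · exfalso
      have ht : max ((L + 2) / 2) (1 / 2) ∈ Ioo (0:ℝ) 1 :=
        ⟨lt_of_lt_of_le (by norm_num) (le_max_right _ _),
          max_lt (by linarith) (by norm_num)⟩
      have h2 := hhigh (Finv (max ((L + 2) / 2) (1 / 2)))
      rw [hFinv _ ht] at h2
      have h3 : (L + 2) / 2 ≤ max ((L + 2) / 2) (1 / 2) := le_max_left _ _
      linarith
    · exact h
    · exfalso
      have ht : min (L / 2) (1 / 2) ∈ Ioo (0:ℝ) 1 :=
        ⟨lt_min (by linarith) (by norm_num),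
          lt_of_le_of_lt (min_le_right _ _) (by norm_num)⟩
      have h2 := hlow (Finv (min (L / 2) (1 / 2)))
      rw [hFinv _ ht] at h2
      have h3 : min (L / 2) (1 / 2) ≤ L / 2 := min_le_left _ _
      linarith
  rw [hL0] at hFbot hlow
  have hFtop' : Tendsto F atTop (𝓝 1) := by
    rw [hL0] at hFtop; simpa using hFtop
  have hhigh' : ∀ x, F x < 1 := by
    intro x; have := hhigh x; rw [hL0] at this; linarith
  have hF01 : ∀ x, 0 < F x ∧ F x < 1 := fun x => ⟨hlow x, hhigh' x⟩
  -- F as integral of f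
  have hFIic : ∀ x, F x = ∫ u in Iic x, f u := by
    intro x
    have h1 : Tendsto (fun a : ℝ => ∫ u in a..x, f u) atBot
        (𝓝 (∫ u in Iic x, f u)) :=
      intervalIntegral_tendsto_integral_Iic x hfint.integrableOn tendsto_id
    have h2 : Tendsto (fun a : ℝ => ∫ u in a..x, f u) atBot (𝓝 (F x)) := by
      have : (fun a : ℝ => ∫ u in a..x, f u) = fun a => F x - F a := by
        funext a; rw [hFTC]
      rw [this]
      simpa using tendsto_const_nhds.sub hFbot
    exact tendsto_nhds_unique h2 h1
  have hFIoi : ∀ x, 1 - F x = ∫ u in Ioi x, f u := by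
    intro x
    have h1 : (∫ u in Iic x, f u) + ∫ u in Ioi x, f u = 1 := by
      have := integral_add_compl (measurableSet_Iic (a := x)) hfint (f := f)
      rw [compl_Iic] at this
      rw [this, hnorm]
    rw [hFIic x] at *
    linarith
  have hFinj : Function.Injective F := hFmono.injective
  have hFinvF : ∀ x, Finv (F x) = x := fun x =>
    hFinj (hFinv (F x) ⟨(hF01 x).1, (hF01 x).2⟩)
  have hrange : range F = Ioo 0 1 := by
    apply Subset.antisymm
    · rintro _ ⟨x, rfl⟩; exact ⟨(hF01 x).1, (hF01 x).2⟩
    · intro t ht; exact ⟨Finv t, hFinv t ht⟩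
  -- change of variables
  have hCOV : ∀ g : ℝ → ℝ, ∫ t in Ioo (0:ℝ) 1, g t = ∫ x : ℝ, f x * g (F x) := by
    intro g
    have h := integral_image_eq_integral_abs_deriv_smul MeasurableSet.univ
      (fun x _ => (hF x).hasDerivWithinAt) (hFinj.injOn) g
    rw [image_univ, hrange, setIntegral_univ] at h
    rw [h]
    congr 1
    funext x
    rw [abs_of_pos (hfpos x), smul_eq_mul]
  -- moments and tail functions
  set m1 : ℝ := ∫ x : ℝ, x * f x with hm1def
  set H : ℝ → ℝ := fun x => ∫ u in Iic x, u * f u with hHdef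
  have hm1Ioi : ∀ x, ∫ u in Ioi x, u * f u = m1 - H x := by
    intro x
    have := integral_add_compl (measurableSet_Iic (a := x)) hm1 (f := fun u => u * f u)
    rw [compl_Iic] at this
    rw [hHdef, hm1def]
    simp only
    linarith [this]
  -- tail decay of x * F x
  have haF : Tendsto (fun a => a * F a) atBot (𝓝 0) := by
    apply squeeze_zero_norm' (a := fun a => ∫ u in Iic a, |u| * f u)
    · filter_upwards [eventually_le_atBot (0:ℝ)] with a ha
      have h1 : ‖a * F a‖ = |a| * F a := by
        rw [norm_mul, Real.norm_eq_abs, Real.norm_eq_abs,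
          abs_of_nonneg (hF01 a).1.le]
      rw [h1, hFIic a, ← integral_const_mul]
      apply setIntegral_mono_on ((hfint.const_mul _).integrableOn) habs.integrableOn
        measurableSet_Iic
      intro u hu
      have : |a| ≤ |u| := by
        rw [abs_of_nonpos ha, abs_of_nonpos (le_trans hu ha)]
        simp only [mem_Iic] at hu
        linarith
      exact mul_le_mul_of_nonneg_right this (hf0 u)
    · exact htail_bot _ habs
  have hbF : Tendsto (fun b => b * (1 - F b)) atTop (𝓝 0) := by
    apply squeeze_zero_norm' (a := fun b => ∫ u in Ioi b, |u| * f u)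
    · filter_upwards [eventually_ge_atTop (0:ℝ)] with b hb
      have h1 : ‖b * (1 - F b)‖ = |b| * (1 - F b) := by
        rw [norm_mul, Real.norm_eq_abs, Real.norm_eq_abs,
          abs_of_nonneg (show (0:ℝ) ≤ 1 - F b by linarith [hhigh' b])]
      rw [h1, hFIoi b, ← integral_const_mul]
      apply setIntegral_mono_on ((hfint.const_mul _).integrableOn) habs.integrableOn
        measurableSet_Ioi
      intro u hu
      simp only [mem_Ioi] at hu
      have : |b| ≤ |u| := by
        rw [abs_of_nonneg hb, abs_of_nonneg (by linarith)]
        linarith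
      exact mul_le_mul_of_nonneg_right this (hf0 u)
    · exact htail_top _ habs
  -- integral of F over Iic x
  have hA : ∀ x : ℝ, IntegrableOn F (Iic x) ∧
      ∫ y in Iic x, F y = x * F x - H x := by
    intro x
    have hxF : ∀ u : ℝ, HasDerivAt (fun v => v * F v) (F u + u * f u) u := by
      intro u
      have := (hasDerivAt_id u).fun_mul (hF u)
      simpa [add_comm] using this
    have hFa : ∀ a : ℝ, ∫ u in a..x, F u
        = x * F x - a * F a - ∫ u in a..x, u * f u := by
      intro a
      have h1 : ∫ u in a..x, (F u + u * f u) = x * F x - a * F a :=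
        intervalIntegral.integral_eq_sub_of_hasDerivAt (fun u _ => hxF u)
          ((hFcont.intervalIntegrable a x).add hm1.intervalIntegrable)
      rw [intervalIntegral.integral_add (hFcont.intervalIntegrable a x)
        hm1.intervalIntegrable] at h1
      linarith
    have hHa : Tendsto (fun a : ℝ => ∫ u in a..x, u * f u) atBot (𝓝 (H x)) :=
      intervalIntegral_tendsto_integral_Iic x hm1.integrableOn tendsto_id
    have hlim : Tendsto (fun a : ℝ => ∫ u in a..x, F u) atBot
        (𝓝 (x * F x - H x)) := by
      have h2 : (fun a : ℝ => ∫ u in a..x, F u)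
          = fun a => x * F x - a * F a - ∫ u in a..x, u * f u := funext hFa
      rw [h2]
      simpa using (tendsto_const_nhds.sub haF).sub hHa
    have hint : IntegrableOn F (Iic x) := by
      apply integrableOn_Iic_of_intervalIntegral_norm_tendsto (x * F x - H x) x
        (fun i => hFcont.integrableOn_Ioc) tendsto_id
      refine hlim.congr fun i => ?_
      simp only [id_eq]
      apply intervalIntegral.integral_congr
      intro u _
      exact (Real.norm_of_nonneg (hF01 u).1.le).symm
    exact ⟨hint, tendsto_nhds_unique
      (intervalIntegral_tendsto_integral_Iic x hint tendsto_id) hlim⟩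
  -- integral of 1 - F over Ioi x
  have hB : ∀ x : ℝ, IntegrableOn (fun y => 1 - F y) (Ioi x) ∧
      ∫ y in Ioi x, (1 - F y) = (m1 - H x) - x * (1 - F x) := by
    intro x
    have hxF : ∀ u : ℝ, HasDerivAt (fun v => v * (1 - F v))
        ((1 - F u) - u * f u) u := by
      intro u
      have h0 := ((hasDerivAt_const u (1:ℝ)).fun_sub (hF u))
      have := (hasDerivAt_id u).fun_mul h0
      exact this.congr_deriv (by simp only [id, one_mul, zero_sub]; ring)
    have h1Fint : ∀ a b : ℝ, IntervalIntegrable (fun y => 1 - F y) volume a b :=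
      fun a b => (continuous_const.sub hFcont).intervalIntegrable a b
    have hFb : ∀ b : ℝ, ∫ u in x..b, (1 - F u)
        = b * (1 - F b) - x * (1 - F x) + ∫ u in x..b, u * f u := by
      intro b
      have h1 : ∫ u in x..b, ((1 - F u) - u * f u)
          = b * (1 - F b) - x * (1 - F x) :=
        intervalIntegral.integral_eq_sub_of_hasDerivAt (fun u _ => hxF u)
          ((h1Fint x b).sub hm1.intervalIntegrable)
      rw [intervalIntegral.integral_sub (h1Fint x b) hm1.intervalIntegrable] at h1
      linarith
    have hHb : Tendsto (fun b : ℝ => ∫ u in x..b, u * f u) atTop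
        (𝓝 (m1 - H x)) := by
      have := intervalIntegral_tendsto_integral_Ioi x hm1.integrableOn tendsto_id
      rwa [hm1Ioi x] at this
    have hlim : Tendsto (fun b : ℝ => ∫ u in x..b, (1 - F u)) atTop
        (𝓝 ((m1 - H x) - x * (1 - F x))) := by
      have h2 : (fun b : ℝ => ∫ u in x..b, (1 - F u))
          = fun b => b * (1 - F b) - x * (1 - F x) + ∫ u in x..b, u * f u :=
        funext hFb
      rw [h2]
      have h4 := (hbF.sub (tendsto_const_nhds (x := x * (1 - F x)))).add hHb
      convert h4 using 2
      ring
    have hint : IntegrableOn (fun y => 1 - F y) (Ioi x) := by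
      apply integrableOn_Ioi_of_intervalIntegral_norm_tendsto
        ((m1 - H x) - x * (1 - F x)) x
        (fun i => (continuous_const.sub hFcont).integrableOn_Ioc) tendsto_id
      refine hlim.congr fun i => ?_
      simp only [id_eq]
      apply intervalIntegral.integral_congr
      intro u _
      exact (Real.norm_of_nonneg (show (0:ℝ) ≤ 1 - F u by linarith [hhigh' u])).symm
    exact ⟨hint, tendsto_nhds_unique
      (intervalIntegral_tendsto_integral_Ioi x hint tendsto_id) hlim⟩
  -- the inner integral
  set φ : ℝ → ℝ := fun x => m1 * F x - H x with hφdef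
  have hInner : ∀ x : ℝ, Integrable (fun y => min (F x) (F y) - F x * F y) ∧
      (∫ y : ℝ, (min (F x) (F y) - F x * F y)) = φ x := by
    intro x
    have hsplit : (fun y => min (F x) (F y) - F x * F y) = fun y =>
        (Iic x).indicator (fun y => (1 - F x) * F y) y
          + (Ioi x).indicator (fun y => F x * (1 - F y)) y := by
      funext y
      rcases le_or_gt y x with h | h
      · rw [indicator_of_mem (mem_Iic.2 h), indicator_of_notMem (by simp [h])]
        rw [min_eq_right (hFmono.monotone h)]
        ring
      · rw [indicator_of_notMem (by simp [h]), indicator_of_mem (mem_Ioi.2 h)]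
        rw [min_eq_left (hFmono.monotone h.le)]
        ring
    have i1 : Integrable ((Iic x).indicator (fun y => (1 - F x) * F y)) :=
      MeasureTheory.IntegrableOn.integrable_indicator
        ((hA x).1.const_mul _) measurableSet_Iic
    have i2 : Integrable ((Ioi x).indicator (fun y => F x * (1 - F y))) :=
      MeasureTheory.IntegrableOn.integrable_indicator
        ((hB x).1.const_mul _) measurableSet_Ioi
    rw [hsplit]
    refine ⟨i1.add i2, ?_⟩
    rw [integral_add i1 i2, integral_indicator measurableSet_Iic,
      integral_indicator measurableSet_Ioi, integral_const_mul, integral_const_mul,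
      (hA x).2, (hB x).2]
    ring
  have hφ0 : ∀ x, 0 ≤ φ x := by
    intro x
    have a0 : 0 ≤ ∫ y in Iic x, F y :=
      setIntegral_nonneg measurableSet_Iic fun y _ => (hF01 y).1.le
    have b0 : 0 ≤ ∫ y in Ioi x, (1 - F y) :=
      setIntegral_nonneg measurableSet_Ioi fun y _ => by linarith [hhigh' y]
    have key : φ x = (1 - F x) * (∫ y in Iic x, F y)
        + F x * ∫ y in Ioi x, (1 - F y) := by
      rw [(hA x).2, (hB x).2, hφdef]; ring
    rw [key]
    exact add_nonneg (mul_nonneg (by linarith [hhigh' x]) a0)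
      (mul_nonneg (hF01 x).1.le b0)
  have hHcont : Continuous H := by
    have h2 : H = fun x => H 0 + ∫ u in (0:ℝ)..x, u * f u := by
      funext x
      rw [← intervalIntegral.integral_Iic_sub_Iic hm1.integrableOn hm1.integrableOn]
      simp [hHdef]
    rw [h2]
    exact continuous_const.add
      (intervalIntegral.continuous_primitive (fun a b => hm1.intervalIntegrable) 0)
  have hφcont : Continuous φ := (continuous_const.mul hFcont).sub hHcont
  -- representations of φ as tail integrals
  have hφIic : ∀ x, φ x = ∫ u in Iic x, (m1 - u) * f u := by
    intro x
    have h1 : ∫ u in Iic x, (m1 - u) * f u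
        = m1 * (∫ u in Iic x, f u) - ∫ u in Iic x, u * f u := by
      have h0 : ∀ u : ℝ, (m1 - u) * f u = m1 * f u - u * f u := fun u => by ring
      simp_rw [h0]
      rw [integral_sub ((hfint.const_mul _).integrableOn) hm1.integrableOn,
        integral_const_mul]
    rw [h1, ← hFIic x]
  have hφIoi : ∀ x, φ x = ∫ u in Ioi x, (u - m1) * f u := by
    intro x
    have h1 : ∫ u in Ioi x, (u - m1) * f u
        = (∫ u in Ioi x, u * f u) - m1 * ∫ u in Ioi x, f u := by
      have h0 : ∀ u : ℝ, (u - m1) * f u = u * f u - m1 * f u := fun u => by ring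
      simp_rw [h0]
      rw [integral_sub hm1.integrableOn ((hfint.const_mul _).integrableOn),
        integral_const_mul]
    rw [h1, hm1Ioi x, ← hFIoi x, hφdef]
    ring
  have hsq : Integrable (fun u => (u - m1) ^ 2 * f u) := by
    have h0 : (fun u => (u - m1) ^ 2 * f u)
        = fun u => u ^ 2 * f u - (2 * m1) * (u * f u) + m1 ^ 2 * f u := by
      funext u; ring
    rw [h0]
    exact (hm2.sub (hm1.const_mul _)).add (hfint.const_mul _)
  have hum1 : Integrable (fun u => (u - m1) * f u) := by
    refine (hm1.sub (hfint.const_mul m1)).congr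
      (Filter.Eventually.of_forall fun u => ?_)
    simp only [Pi.sub_apply]
    ring
  have hm1c : Integrable (fun u => (m1 - u) * f u) := by
    refine ((hfint.const_mul m1).sub hm1).congr
      (Filter.Eventually.of_forall fun u => ?_)
    simp only [Pi.sub_apply]
    ring
  have hq0 : ∀ u : ℝ, 0 ≤ (u - m1) ^ 2 * f u := fun u =>
    mul_nonneg (sq_nonneg _) (hf0 u)
  -- Tonelli: upper part
  have key_upper : IntegrableOn φ (Ioi m1) ∧
      ∫ x in Ioi m1, φ x = ∫ u in Ioi m1, (u - m1) ^ 2 * f u := by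
    set k : ℝ → ENNReal := fun v => ENNReal.ofReal ((v - m1) * f v) with hkdef
    have hker : Measurable (Function.uncurry fun (x u : ℝ) =>
        (Ioi x).indicator k u) := by
      have h1 : (Function.uncurry fun (x u : ℝ) => (Ioi x).indicator k u)
          = {q : ℝ × ℝ | q.1 < q.2}.indicator
              (fun q => ENNReal.ofReal ((q.2 - m1) * f q.2)) := by
        funext p
        obtain ⟨a, b⟩ := p
        simp only [Function.uncurry_apply_pair]
        by_cases h : a < b
        · rw [indicator_of_mem (mem_Ioi.2 h),
            indicator_of_mem (show (a, b) ∈ {q : ℝ × ℝ | q.1 < q.2} from h)]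
        · rw [indicator_of_notMem (fun hc => h (mem_Ioi.1 hc)),
            indicator_of_notMem
              (show (a, b) ∉ {q : ℝ × ℝ | q.1 < q.2} from h)]
      rw [h1]
      exact (((measurable_snd.sub measurable_const).mul
        (hfm.comp measurable_snd)).ennreal_ofReal).indicator
        (measurableSet_lt measurable_fst measurable_snd)
    have step_i : ∀ x ∈ Ioi m1, ENNReal.ofReal (φ x)
        = ∫⁻ u, (Ioi x).indicator k u := by
      intro x hx
      rw [mem_Ioi] at hx
      rw [hφIoi x, ofReal_integral_eq_lintegral_ofReal hum1.integrableOn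
        ((ae_restrict_iff' measurableSet_Ioi).2 (Filter.Eventually.of_forall
          fun u hu => mul_nonneg (by rw [mem_Ioi] at hu; linarith) (hf0 u))),
        ← lintegral_indicator measurableSet_Ioi]
    have step_iii : ∀ u : ℝ,
        (∫⁻ x in Ioi m1, (Ioi x).indicator k u)
          = (Ioi m1).indicator (fun v => ENNReal.ofReal ((v - m1) ^ 2 * f v)) u := by
      intro u
      have h1 : ∀ x : ℝ, (Ioi x).indicator k u
          = (Iio u).indicator (fun _ => k u) x := by
        intro x
        by_cases h : x < u <;> simp [h]
      simp_rw [h1]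
      rw [lintegral_indicator_const measurableSet_Iio,
        Measure.restrict_apply measurableSet_Iio, Iio_inter_Ioi,
        Real.volume_Ioo]
      rcases le_or_gt u m1 with h | h
      · rw [indicator_of_notMem (by simp [not_lt.2 h]),
          ENNReal.ofReal_eq_zero.2 (by linarith), mul_zero]
      · rw [indicator_of_mem (mem_Ioi.2 h), hkdef]
        rw [← ENNReal.ofReal_mul (mul_nonneg (by linarith) (hf0 u))]
        congr 1
        ring
    have hupper_l : ∫⁻ x in Ioi m1, ENNReal.ofReal (φ x)
        = ENNReal.ofReal (∫ u in Ioi m1, (u - m1) ^ 2 * f u) := by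
      calc ∫⁻ x in Ioi m1, ENNReal.ofReal (φ x)
          = ∫⁻ x in Ioi m1, ∫⁻ u, (Ioi x).indicator k u := by
            exact setLIntegral_congr_fun measurableSet_Ioi
              step_i
        _ = ∫⁻ u, ∫⁻ x in Ioi m1, (Ioi x).indicator k u :=
            lintegral_lintegral_swap hker.aemeasurable
        _ = ∫⁻ u, (Ioi m1).indicator
              (fun v => ENNReal.ofReal ((v - m1) ^ 2 * f v)) u :=
            lintegral_congr step_iii
        _ = ∫⁻ u in Ioi m1, ENNReal.ofReal ((u - m1) ^ 2 * f u) :=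
            lintegral_indicator measurableSet_Ioi _
        _ = ENNReal.ofReal (∫ u in Ioi m1, (u - m1) ^ 2 * f u) :=
            (ofReal_integral_eq_lintegral_ofReal hsq.integrableOn
              (Filter.Eventually.of_forall fun u => hq0 u)).symm
    have hφOn : IntegrableOn φ (Ioi m1) := by
      refine ⟨hφcont.aestronglyMeasurable.restrict, ?_⟩
      rw [hasFiniteIntegral_iff_ofReal (Filter.Eventually.of_forall fun x => hφ0 x)]
      rw [hupper_l]
      exact ENNReal.ofReal_lt_top
    refine ⟨hφOn, ?_⟩
    have h2 := ofReal_integral_eq_lintegral_ofReal hφOn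
      (Filter.Eventually.of_forall fun x => hφ0 x)
    rw [hupper_l] at h2
    exact ((ENNReal.ofReal_eq_ofReal_iff
      (setIntegral_nonneg measurableSet_Ioi fun x _ => hφ0 x)
      (setIntegral_nonneg measurableSet_Ioi fun u _ => hq0 u)).1 h2)
  -- Tonelli: lower part
  have key_lower : IntegrableOn φ (Iic m1) ∧
      ∫ x in Iic m1, φ x = ∫ u in Iic m1, (u - m1) ^ 2 * f u := by
    set k : ℝ → ENNReal := fun v => ENNReal.ofReal ((m1 - v) * f v) with hkdef
    have hker : Measurable (Function.uncurry fun (x u : ℝ) =>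
        (Iic x).indicator k u) := by
      have h1 : (Function.uncurry fun (x u : ℝ) => (Iic x).indicator k u)
          = {q : ℝ × ℝ | q.2 ≤ q.1}.indicator
              (fun q => ENNReal.ofReal ((m1 - q.2) * f q.2)) := by
        funext p
        obtain ⟨a, b⟩ := p
        simp only [Function.uncurry_apply_pair]
        by_cases h : b ≤ a
        · rw [indicator_of_mem (mem_Iic.2 h),
            indicator_of_mem (show (a, b) ∈ {q : ℝ × ℝ | q.2 ≤ q.1} from h)]
        · rw [indicator_of_notMem (fun hc => h (mem_Iic.1 hc)),
            indicator_of_notMem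
              (show (a, b) ∉ {q : ℝ × ℝ | q.2 ≤ q.1} from h)]
      rw [h1]
      exact (((measurable_const.sub measurable_snd).mul
        (hfm.comp measurable_snd)).ennreal_ofReal).indicator
        (measurableSet_le measurable_snd measurable_fst)
    have step_i : ∀ x ∈ Iic m1, ENNReal.ofReal (φ x)
        = ∫⁻ u, (Iic x).indicator k u := by
      intro x hx
      rw [mem_Iic] at hx
      rw [hφIic x, ofReal_integral_eq_lintegral_ofReal hm1c.integrableOn
        ((ae_restrict_iff' measurableSet_Iic).2 (Filter.Eventually.of_forall
          fun u hu => mul_nonneg (by rw [mem_Iic] at hu; linarith) (hf0 u))),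
        ← lintegral_indicator measurableSet_Iic]
    have step_iii : ∀ u : ℝ,
        (∫⁻ x in Iic m1, (Iic x).indicator k u)
          = (Iic m1).indicator (fun v => ENNReal.ofReal ((v - m1) ^ 2 * f v)) u := by
      intro u
      have h1 : ∀ x : ℝ, (Iic x).indicator k u
          = (Ici u).indicator (fun _ => k u) x := by
        intro x
        by_cases h : u ≤ x <;> simp [h]
      simp_rw [h1]
      rw [lintegral_indicator_const measurableSet_Ici,
        Measure.restrict_apply measurableSet_Ici, Ici_inter_Iic,
        Real.volume_Icc]
      rcases lt_or_ge m1 u with h | h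
      · rw [indicator_of_notMem (by simp [not_le.2 h]),
          ENNReal.ofReal_eq_zero.2 (by linarith), mul_zero]
      · rw [indicator_of_mem (mem_Iic.2 h), hkdef]
        rw [← ENNReal.ofReal_mul (mul_nonneg (by linarith) (hf0 u))]
        congr 1
        ring
    have hlower_l : ∫⁻ x in Iic m1, ENNReal.ofReal (φ x)
        = ENNReal.ofReal (∫ u in Iic m1, (u - m1) ^ 2 * f u) := by
      calc ∫⁻ x in Iic m1, ENNReal.ofReal (φ x)
          = ∫⁻ x in Iic m1, ∫⁻ u, (Iic x).indicator k u := by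
            exact setLIntegral_congr_fun measurableSet_Iic
              step_i
        _ = ∫⁻ u, ∫⁻ x in Iic m1, (Iic x).indicator k u :=
            lintegral_lintegral_swap hker.aemeasurable
        _ = ∫⁻ u, (Iic m1).indicator
              (fun v => ENNReal.ofReal ((v - m1) ^ 2 * f v)) u :=
            lintegral_congr step_iii
        _ = ∫⁻ u in Iic m1, ENNReal.ofReal ((u - m1) ^ 2 * f u) :=
            lintegral_indicator measurableSet_Iic _
        _ = ENNReal.ofReal (∫ u in Iic m1, (u - m1) ^ 2 * f u) :=
            (ofReal_integral_eq_lintegral_ofReal hsq.integrableOn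
              (Filter.Eventually.of_forall fun u => hq0 u)).symm
    have hφOn : IntegrableOn φ (Iic m1) := by
      refine ⟨hφcont.aestronglyMeasurable.restrict, ?_⟩
      rw [hasFiniteIntegral_iff_ofReal (Filter.Eventually.of_forall fun x => hφ0 x)]
      rw [hlower_l]
      exact ENNReal.ofReal_lt_top
    refine ⟨hφOn, ?_⟩
    have h2 := ofReal_integral_eq_lintegral_ofReal hφOn
      (Filter.Eventually.of_forall fun x => hφ0 x)
    rw [hlower_l] at h2
    exact ((ENNReal.ofReal_eq_ofReal_iff
      (setIntegral_nonneg measurableSet_Iic fun x _ => hφ0 x)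
      (setIntegral_nonneg measurableSet_Iic fun u _ => hq0 u)).1 h2)
  -- total integral of φ
  have hφint : Integrable φ := by
    have := key_lower.1.union key_upper.1
    rwa [Iic_union_Ioi, integrableOn_univ] at this
  have hφtotal : ∫ x : ℝ, φ x = (∫ x : ℝ, x ^ 2 * f x) - m1 ^ 2 := by
    have h1 : ∫ x : ℝ, φ x = ∫ u : ℝ, (u - m1) ^ 2 * f u := by
      have e1 := integral_add_compl (measurableSet_Iic (a := m1)) hφint (f := φ)
      have e2 := integral_add_compl (measurableSet_Iic (a := m1)) hsq
        (f := fun u => (u - m1) ^ 2 * f u)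
      rw [compl_Iic] at e1 e2
      rw [← e1, ← e2, key_lower.2, key_upper.2]
    rw [h1]
    have h0 : (fun u : ℝ => (u - m1) ^ 2 * f u)
        = fun u => u ^ 2 * f u - (2 * m1) * (u * f u) + m1 ^ 2 * f u := by
      funext u; ring
    have i3 : Integrable (fun u : ℝ => u ^ 2 * f u - 2 * m1 * (u * f u)) := by
      exact hm2.sub (hm1.const_mul (2 * m1))
    rw [h0, integral_add i3 (hfint.const_mul (m1 ^ 2)),
      integral_sub hm2 (hm1.const_mul (2 * m1)), integral_const_mul,
      integral_const_mul, hnorm, ← hm1def]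
    ring
  -- assembling the change of variables
  have step1 : ∀ s ∈ Ioo (0:ℝ) 1,
      (∫ t in Ioo (0:ℝ) 1, (min s t - s * t) / (f (Finv s) * f (Finv t)))
        = (∫ y : ℝ, (min s (F y) - s * F y)) / f (Finv s) := by
    intro s _
    rw [hCOV (fun t => (min s t - s * t) / (f (Finv s) * f (Finv t))),
      ← integral_div]
    congr 1
    funext y
    rw [hFinvF y]
    field_simp
    rw [mul_div_mul_left _ _ (hfpos y).ne']
  have step2 : ∫ s in Ioo (0 : ℝ) 1, ∫ t in Ioo (0 : ℝ) 1,
      (min s t - s * t) / (f (Finv s) * f (Finv t)) = ∫ x : ℝ, φ x := by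
    rw [setIntegral_congr_fun measurableSet_Ioo step1,
      hCOV (fun s => (∫ y : ℝ, (min s (F y) - s * F y)) / f (Finv s))]
    congr 1
    funext x
    rw [hFinvF x]
    have h1 : (∫ y : ℝ, (min (F x) (F y) - F x * F y)) = φ x := (hInner x).2
    rw [h1]
    rw [mul_comm]
    exact div_mul_cancel₀ _ (hfpos x).ne'
  rw [step2, hφtotal]
end

section
/- In the projection step of the semiparametric efficiency calculation, the minimizer over measurable functions Q of ε(Q) = E[(Z·g(Y,θ) − (Z·Q(h⁻¹(Y,θ),θ) + (1−Z)·Q(Y,θ)))²] is Q*(y,θ) = p·g(h(y,θ),θ), where P(Z=1) = p ∈ (0,1), Z is independent of the potential outcome structure, Y | Z=0 ~ f₀, Y | Z=1 ~ f₁(·,θ), and P(Y ≤ h(y,θ) | Z=1) = P(Y ≤ y | Z=0). -/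
open MeasureTheory Real Set

/-- The projection step: `Q*(y) = p · g(h(y))` minimizes
`ε(Q) = p · E[(g(h(Y)) − Q(Y))² | Z=0] + (1−p) · E[Q(Y)² | Z=0]`
over square-integrable `Q`. -/
theorem stmt_18
    (f₀ g : ℝ → ℝ) (h : ℝ → ℝ) (p : ℝ)
    (hp : p ∈ Set.Ioo (0 : ℝ) 1)
    (hf₀ : ∀ y, 0 ≤ f₀ y) (hnorm₀ : (∫ y : ℝ, f₀ y) = 1)
    (hg2 : Integrable (fun y => (g (h y)) ^ 2 * f₀ y)) :
    ∀ Q : ℝ → ℝ,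
      Integrable (fun y => (g (h y) - Q y) ^ 2 * f₀ y) →
      Integrable (fun y => (Q y) ^ 2 * f₀ y) →
      p * (∫ y : ℝ, (g (h y) - p * g (h y)) ^ 2 * f₀ y)
          + (1 - p) * (∫ y : ℝ, (p * g (h y)) ^ 2 * f₀ y)
        ≤ p * (∫ y : ℝ, (g (h y) - Q y) ^ 2 * f₀ y)
          + (1 - p) * (∫ y : ℝ, (Q y) ^ 2 * f₀ y) := by
  obtain ⟨hp0, hp1⟩ := hp
  intro Q hQ1 hQ2
  have h1 : (fun y => (g (h y) - p * g (h y)) ^ 2 * f₀ y)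
      = fun y => (1 - p) ^ 2 * ((g (h y)) ^ 2 * f₀ y) := funext fun y => by ring
  have h2 : (fun y => (p * g (h y)) ^ 2 * f₀ y)
      = fun y => p ^ 2 * ((g (h y)) ^ 2 * f₀ y) := funext fun y => by ring
  have hR : p * (∫ y : ℝ, (g (h y) - Q y) ^ 2 * f₀ y)
      + (1 - p) * (∫ y : ℝ, (Q y) ^ 2 * f₀ y)
      = ∫ y : ℝ, (p * ((g (h y) - Q y) ^ 2 * f₀ y)
          + (1 - p) * ((Q y) ^ 2 * f₀ y)) := by
    rw [integral_add (hQ1.const_mul p) (hQ2.const_mul (1 - p)),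
      integral_const_mul, integral_const_mul]
  rw [h1, h2, integral_const_mul, integral_const_mul, hR]
  have hL : p * ((1 - p) ^ 2 * ∫ y : ℝ, (g (h y)) ^ 2 * f₀ y)
      + (1 - p) * (p ^ 2 * ∫ y : ℝ, (g (h y)) ^ 2 * f₀ y)
      = ∫ y : ℝ, p * (1 - p) * ((g (h y)) ^ 2 * f₀ y) := by
    rw [integral_const_mul]; ring
  rw [hL]
  refine integral_mono (hg2.const_mul _)
    ((hQ1.const_mul p).add (hQ2.const_mul (1 - p))) fun y => ?_
  have hf := hf₀ y
  nlinarith [mul_nonneg (sq_nonneg (Q y - p * g (h y))) hf]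
end
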